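/- arXiv:1311.4860 — 8 statements merged into one kernel-verified Lean document; each statement's English description precedes it below -/
import Mathlib

section
/- Let φ satisfy Properties 1 and 2, let T₁,…,T_m be nonempty subsets of ℝ², and let the initial multiset be {φ(T₁),…,φ(T_m)}. If C and C' are multisets of subsets of ℝ² that are both reachable from the initial multiset under the reflexive–transitive closure of the merge-step relation, and both C and C' are terminal (their elements are pairwise disjoint, counting multiplicity), then C = C'. (The φ-cover is well-defined.) -/
/-!
Properties 1 and 2 say exactly that `φ` is a closure operator, so `φ (φ A ∪ φ B) = φ (A ∪ B)`.
The merge relation then has the diamond property: two merges of the same multiset either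
coincide, or share a set `X` (merging `X` with `Y` and with `Z`; both results merge in one step
into `φ (X ∪ Y ∪ Z)`), or merge two different pairs (then they commute). By Church–Rosser
any two reachable multisets have a common descendant, and a pairwise disjoint multiset admits
no merge, so two terminal reachable multisets coincide.
-/

/-- The merge-step relation on multisets of subsets of ℝ². -/
def MergeStep (φ : Set (ℝ × ℝ) → Set (ℝ × ℝ))
    (C C' : Multiset (Set (ℝ × ℝ))) : Prop :=
  ∃ (A B : Set (ℝ × ℝ)) (rest : Multiset (Set (ℝ × ℝ))),
    C = A ::ₘ B ::ₘ rest ∧ A ∩ B ≠ ∅ ∧ C' = φ (φ A ∪ φ B) ::ₘ rest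

open Set

theorem Multiset.Pairwise.rel_of_cons_cons {α : Type*} {r : α → α → Prop} [Std.Symm r]
    {a b : α} {s : Multiset α} (h : (a ::ₘ b ::ₘ s).Pairwise r) : r a b := by
  induction s using Quotient.inductionOn with
  | h l => exact List.rel_of_pairwise_cons (pairwise_coe_iff_pairwise.mp h) List.mem_cons_self

theorem ClosureOperator.closure_union_closure {α : Type*} (c : ClosureOperator (Set α))
    (A B : Set α) : c (c A ∪ c B) = c (A ∪ B) :=
  c.closure_sup_closure A B

theorem ClosureOperator.closure_union_closure_left {α : Type*} (c : ClosureOperator (Set α))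
    (A B : Set α) : c (c A ∪ B) = c (A ∪ B) :=
  c.closure_sup_closure_left A B

namespace MergeStep

variable {φ : Set (ℝ × ℝ) → Set (ℝ × ℝ)} {C C' C₁ C₂ : Multiset (Set (ℝ × ℝ))}

theorem cons (h : MergeStep φ C C') (X : Set (ℝ × ℝ)) : MergeStep φ (X ::ₘ C) (X ::ₘ C') := by
  obtain ⟨A, B, rest, rfl, hAB, rfl⟩ := h
  refine ⟨A, B, X ::ₘ rest, ?_, hAB, Multiset.cons_swap _ _ _⟩
  rw [Multiset.cons_swap X, Multiset.cons_swap X]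

theorem not_of_pairwise_disjoint (hC : C.Pairwise Disjoint) : ¬ MergeStep φ C C' := by
  rintro ⟨A, B, rest, rfl, hAB, -⟩
  exact hAB (disjoint_iff_inter_eq_empty.mp hC.rel_of_cons_cons)

theorem reflTransGen_eq_of_pairwise_disjoint (hC : C.Pairwise Disjoint)
    (h : Relation.ReflTransGen (MergeStep φ) C C') : C = C' := by
  rcases h.cases_head with rfl | ⟨_, hstep, -⟩
  · rfl
  · exact absurd hstep (not_of_pairwise_disjoint hC)

variable (c : ClosureOperator (Set (ℝ × ℝ)))

theorem cons_cons {A B : Set (ℝ × ℝ)} (rest : Multiset (Set (ℝ × ℝ)))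
    (hAB : (A ∩ B).Nonempty) : MergeStep c (A ::ₘ B ::ₘ rest) (c (A ∪ B) ::ₘ rest) :=
  ⟨A, B, rest, rfl, hAB.ne_empty, by rw [c.closure_union_closure]⟩

theorem closure_cons {A B Z : Set (ℝ × ℝ)} (rest : Multiset (Set (ℝ × ℝ)))
    (h : ((A ∪ B) ∩ Z).Nonempty) :
    MergeStep c (c (A ∪ B) ::ₘ Z ::ₘ rest) (c (A ∪ B ∪ Z) ::ₘ rest) := by
  have hstep := cons_cons c rest (h.mono (inter_subset_inter_left Z (c.le_closure _)))
  rwa [c.closure_union_closure_left] at hstep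

theorem exists_common_of_overlap {X Y Z : Set (ℝ × ℝ)} (rest : Multiset (Set (ℝ × ℝ)))
    (hY : (X ∩ Y).Nonempty) (hZ : (X ∩ Z).Nonempty) :
    ∃ D, MergeStep c (c (X ∪ Y) ::ₘ Z ::ₘ rest) D ∧ MergeStep c (c (X ∪ Z) ::ₘ Y ::ₘ rest) D := by
  refine ⟨c (X ∪ Y ∪ Z) ::ₘ rest, closure_cons c rest ?_, ?_⟩
  · exact hZ.mono (inter_subset_inter_left Z subset_union_left)
  · rw [union_right_comm]
    exact closure_cons c rest (hY.mono (inter_subset_inter_left Y subset_union_left))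

theorem exists_common_of_separate {A B D E : Set (ℝ × ℝ)} (rest : Multiset (Set (ℝ × ℝ)))
    (hAB : (A ∩ B).Nonempty) (hDE : (D ∩ E).Nonempty) :
    ∃ F, MergeStep c (c (A ∪ B) ::ₘ D ::ₘ E ::ₘ rest) F ∧
      MergeStep c (c (D ∪ E) ::ₘ A ::ₘ B ::ₘ rest) F := by
  refine ⟨c (A ∪ B) ::ₘ c (D ∪ E) ::ₘ rest, (cons_cons c rest hDE).cons _, ?_⟩
  rw [Multiset.cons_swap (c (A ∪ B))]
  exact (cons_cons c rest hAB).cons _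

theorem eq_or_exists_common (h₁ : MergeStep c C C₁) (h₂ : MergeStep c C C₂) :
    C₁ = C₂ ∨ ∃ D, MergeStep c C₁ D ∧ MergeStep c C₂ D := by
  obtain ⟨A₁, A₂, r₁, rfl, h₁, rfl⟩ := h₁
  obtain ⟨E₁, E₂, r₂, heq, h₂, rfl⟩ := h₂
  rw [← nonempty_iff_ne_empty] at h₁ h₂
  simp only [c.closure_union_closure]
  have h₁' : (A₂ ∩ A₁).Nonempty := inter_comm A₁ A₂ ▸ h₁
  have h₂' : (E₂ ∩ E₁).Nonempty := inter_comm E₁ E₂ ▸ h₂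
  -- Peel `A₁ ::ₘ A₂ ::ₘ r₁ = E₁ ::ₘ E₂ ::ₘ r₂`: the two pairs coincide, share one set, or are
  -- different pairs of entries.
  rcases Multiset.cons_eq_cons.mp heq with ⟨rfl, h⟩ | ⟨-, cs, h, h'⟩
  · rcases Multiset.cons_eq_cons.mp h with ⟨rfl, rfl⟩ | ⟨-, s, rfl, rfl⟩
    · exact .inl rfl
    · exact .inr (exists_common_of_overlap c s h₁ h₂)
  rcases Multiset.cons_eq_cons.mp h with ⟨rfl, rfl⟩ | ⟨-, s, rfl, rfl⟩
  · rcases Multiset.cons_eq_cons.mp h' with ⟨rfl, rfl⟩ | ⟨-, t, rfl, rfl⟩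
    · exact .inl (by rw [union_comm])
    · rw [union_comm A₁]
      exact .inr (exists_common_of_overlap c t h₁' h₂)
  rcases Multiset.cons_eq_cons.mp h' with ⟨rfl, rfl⟩ | ⟨-, t, rfl, h''⟩
  · rw [union_comm E₁]
    exact .inr (exists_common_of_overlap c s h₁ h₂')
  rcases Multiset.cons_eq_cons.mp h'' with ⟨rfl, rfl⟩ | ⟨-, u, rfl, rfl⟩
  · rw [union_comm A₁, union_comm E₁]
    exact .inr (exists_common_of_overlap c s h₁' h₂')
  · exact .inr (exists_common_of_separate c u h₁ h₂)

theorem church_rosser (h : Relation.ReflTransGen (MergeStep c) C C₁)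
    (h' : Relation.ReflTransGen (MergeStep c) C C₂) :
    Relation.Join (Relation.ReflTransGen (MergeStep c)) C₁ C₂ := by
  refine Relation.church_rosser (fun _ _ _ h h' => ?_) h h'
  rcases eq_or_exists_common c h h' with rfl | ⟨D, hD, hD'⟩
  · exact ⟨_, .refl, .refl⟩
  · exact ⟨D, .single hD, .single hD'⟩

end MergeStep

theorem phi_cover_well_defined_general
    (φ : Set (ℝ × ℝ) → Set (ℝ × ℝ))
    (h1 : ∀ A : Set (ℝ × ℝ), A ⊆ φ A)
    (h2 : ∀ A B : Set (ℝ × ℝ), A ⊆ φ B → φ A ⊆ φ B)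
    (m : ℕ) (T : Fin m → Set (ℝ × ℝ))
    (C C' : Multiset (Set (ℝ × ℝ)))
    (hC : Relation.ReflTransGen (MergeStep φ)
      (Multiset.map (fun i => φ (T i)) Finset.univ.val) C)
    (hC' : Relation.ReflTransGen (MergeStep φ)
      (Multiset.map (fun i => φ (T i)) Finset.univ.val) C')
    (htC : C.Pairwise Disjoint) (htC' : C'.Pairwise Disjoint) :
    C = C' := by
  obtain ⟨D, hCD, hC'D⟩ :=
    MergeStep.church_rosser (ClosureOperator.mk₂ φ h1 fun A B => h2 A B) hC hC'
  rw [MergeStep.reflTransGen_eq_of_pairwise_disjoint htC hCD,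
    MergeStep.reflTransGen_eq_of_pairwise_disjoint htC' hC'D]

theorem phi_cover_well_defined
    (φ : Set (ℝ × ℝ) → Set (ℝ × ℝ))
    (h1 : ∀ A : Set (ℝ × ℝ), A ⊆ φ A)
    (h2 : ∀ A B : Set (ℝ × ℝ), A ⊆ φ B → φ A ⊆ φ B)
    (m : ℕ) (T : Fin m → Set (ℝ × ℝ)) (hT : ∀ i, (T i).Nonempty)
    (C C' : Multiset (Set (ℝ × ℝ)))
    (hC : Relation.ReflTransGen (MergeStep φ)
      (Multiset.map (fun i => φ (T i)) Finset.univ.val) C)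
    (hC' : Relation.ReflTransGen (MergeStep φ)
      (Multiset.map (fun i => φ (T i)) Finset.univ.val) C')
    (htC : C.Pairwise Disjoint) (htC' : C'.Pairwise Disjoint) :
    C = C' :=
  phi_cover_well_defined_general φ h1 h2 m T C C' hC hC' htC htC'
end

section
/- Let φ satisfy Properties 1 and 2, let T₁,…,T_m be nonempty subsets of ℝ², and let the initial multiset be {φ(T₁),…,φ(T_m)}. If C is any multiset reachable from the initial multiset under the reflexive–transitive closure of the merge-step relation, and C' is a terminal multiset reachable from the initial multiset, then for every element A of C there exists an element B of C' with A ⊆ B. -/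
/-!
Every multiset reachable from the initial one is refined by it: each `φ (T i)` lies in some member.
A terminal multiset `C'` consists of pairwise disjoint `φ`-closed sets. Along any run, every member
of the current multiset stays inside a member of `C'`: when two members meeting in a point are
merged, they sit inside members of `C'` that meet, hence coincide by disjointness, and the closed
set containing both also contains the closure of their union.
-/

section Refinement

variable {α : Type*}

def Refines (C D : Multiset (Set α)) : Prop :=
  ∀ A ∈ C, ∃ B ∈ D, A ⊆ B

theorem Refines.trans {C D E : Multiset (Set α)} (hCD : Refines C D) (hDE : Refines D E) :
    Refines C E := fun A hA =>
  let ⟨B, hB, hAB⟩ := hCD A hA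
  let ⟨E', hE', hBE⟩ := hDE B hB
  ⟨E', hE', hAB.trans hBE⟩

theorem Multiset.Pairwise.eq_of_inter_nonempty {D : Multiset (Set α)}
    (hD : D.Pairwise Disjoint) {B₁ B₂ : Set α} (hB₁ : B₁ ∈ D) (hB₂ : B₂ ∈ D)
    (hB : (B₁ ∩ B₂).Nonempty) : B₁ = B₂ := by
  by_contra hne
  exact Set.not_disjoint_iff_nonempty_inter.mpr hB (hD.forall hB₁ hB₂ hne)

end Refinement

theorem closure_subset_of_subset_of_closed {α : Type*} {φ : Set α → Set α}
    (h1 : ∀ A, A ⊆ φ A) (h2 : ∀ A B, A ⊆ φ B → φ A ⊆ φ B)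
    {A B : Set α} (hAB : A ⊆ B) (hB : φ B ⊆ B) : φ A ⊆ B :=
  (h2 A B (hAB.trans (h1 B))).trans hB

section MergeStep

variable {φ : Set (ℝ × ℝ) → Set (ℝ × ℝ)}

theorem MergeStep.closed_of_closed (h2 : ∀ A B, A ⊆ φ B → φ A ⊆ φ B)
    {C D : Multiset (Set (ℝ × ℝ))} (hstep : MergeStep φ C D) (hC : ∀ X ∈ C, φ X ⊆ X) :
    ∀ X ∈ D, φ X ⊆ X := by
  obtain ⟨A, B, rest, rfl, -, rfl⟩ := hstep
  intro X hX
  rcases Multiset.mem_cons.mp hX with rfl | hX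
  · exact h2 _ _ subset_rfl
  · exact hC X (by simp [hX])

theorem MergeStep.refines (h1 : ∀ A, A ⊆ φ A) {C D : Multiset (Set (ℝ × ℝ))}
    (hstep : MergeStep φ C D) : Refines C D := by
  obtain ⟨A, B, rest, rfl, -, rfl⟩ := hstep
  have hA : A ⊆ φ (φ A ∪ φ B) := (h1 A).trans (Set.subset_union_left.trans (h1 _))
  have hB : B ⊆ φ (φ A ∪ φ B) := (h1 B).trans (Set.subset_union_right.trans (h1 _))
  intro X hX
  rcases Multiset.mem_cons.mp hX with rfl | hX
  · exact ⟨_, Multiset.mem_cons_self _ _, hA⟩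
  rcases Multiset.mem_cons.mp hX with rfl | hX
  · exact ⟨_, Multiset.mem_cons_self _ _, hB⟩
  · exact ⟨X, Multiset.mem_cons_of_mem hX, subset_rfl⟩

theorem Relation.ReflTransGen.mergeStep_refines (h1 : ∀ A, A ⊆ φ A)
    {C D : Multiset (Set (ℝ × ℝ))} (h : Relation.ReflTransGen (MergeStep φ) C D) :
    Refines C D := by
  induction h with
  | refl => exact fun A hA => ⟨A, hA, subset_rfl⟩
  | tail _ hstep ih => exact ih.trans (hstep.refines h1)

theorem Relation.ReflTransGen.mergeStep_closed (h2 : ∀ A B, A ⊆ φ B → φ A ⊆ φ B)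
    {C D : Multiset (Set (ℝ × ℝ))} (h : Relation.ReflTransGen (MergeStep φ) C D)
    (hC : ∀ X ∈ C, φ X ⊆ X) : ∀ X ∈ D, φ X ⊆ X := by
  induction h with
  | refl => exact hC
  | tail _ hstep ih => exact hstep.closed_of_closed h2 ih

theorem MergeStep.refines_of_refines (h1 : ∀ A, A ⊆ φ A) (h2 : ∀ A B, A ⊆ φ B → φ A ⊆ φ B)
    {C D E : Multiset (Set (ℝ × ℝ))} (hstep : MergeStep φ C D)
    (hE : E.Pairwise Disjoint) (hEclosed : ∀ X ∈ E, φ X ⊆ X) (hCE : Refines C E) :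
    Refines D E := by
  obtain ⟨A, B, rest, rfl, hAB, rfl⟩ := hstep
  intro X hX
  rcases Multiset.mem_cons.mp hX with rfl | hX
  · obtain ⟨B₁, hB₁, hAB₁⟩ := hCE A (Multiset.mem_cons_self _ _)
    obtain ⟨B₂, hB₂, hBB₂⟩ := hCE B (by simp)
    obtain ⟨x, hxA, hxB⟩ := Set.nonempty_iff_ne_empty.mpr hAB
    obtain rfl : B₁ = B₂ :=
      hE.eq_of_inter_nonempty hB₁ hB₂ ⟨x, hAB₁ hxA, hBB₂ hxB⟩
    have hB₁closed := hEclosed B₁ hB₁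
    have hunion : φ A ∪ φ B ⊆ B₁ := Set.union_subset
      (closure_subset_of_subset_of_closed h1 h2 hAB₁ hB₁closed)
      (closure_subset_of_subset_of_closed h1 h2 hBB₂ hB₁closed)
    exact ⟨B₁, hB₁, closure_subset_of_subset_of_closed h1 h2 hunion hB₁closed⟩
  · exact hCE X (by simp [hX])

end MergeStep

theorem always_contained_in_terminal_general
    (φ : Set (ℝ × ℝ) → Set (ℝ × ℝ))
    (h1 : ∀ A : Set (ℝ × ℝ), A ⊆ φ A)
    (h2 : ∀ A B : Set (ℝ × ℝ), A ⊆ φ B → φ A ⊆ φ B)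
    (m : ℕ) (T : Fin m → Set (ℝ × ℝ))
    (C C' : Multiset (Set (ℝ × ℝ)))
    (hC : Relation.ReflTransGen (MergeStep φ)
      (Multiset.map (fun i => φ (T i)) Finset.univ.val) C)
    (hC' : Relation.ReflTransGen (MergeStep φ)
      (Multiset.map (fun i => φ (T i)) Finset.univ.val) C')
    (htC' : C'.Pairwise Disjoint) :
    ∀ A ∈ C, ∃ B ∈ C', A ⊆ B := by
  have hinit_closed : ∀ X ∈ Multiset.map (fun i => φ (T i)) Finset.univ.val, φ X ⊆ X := by
    simp only [Multiset.mem_map]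
    rintro _ ⟨i, -, rfl⟩
    exact h2 _ _ subset_rfl
  have hC'closed := hC'.mergeStep_closed h2 hinit_closed
  induction hC with
  | refl => exact hC'.mergeStep_refines h1
  | tail _ hstep ih => exact hstep.refines_of_refines h1 h2 htC' hC'closed ih

theorem always_contained_in_terminal
    (φ : Set (ℝ × ℝ) → Set (ℝ × ℝ))
    (h1 : ∀ A : Set (ℝ × ℝ), A ⊆ φ A)
    (h2 : ∀ A B : Set (ℝ × ℝ), A ⊆ φ B → φ A ⊆ φ B)
    (m : ℕ) (T : Fin m → Set (ℝ × ℝ)) (hT : ∀ i, (T i).Nonempty)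
    (C C' : Multiset (Set (ℝ × ℝ)))
    (hC : Relation.ReflTransGen (MergeStep φ)
      (Multiset.map (fun i => φ (T i)) Finset.univ.val) C)
    (hC' : Relation.ReflTransGen (MergeStep φ)
      (Multiset.map (fun i => φ (T i)) Finset.univ.val) C')
    (htC' : C'.Pairwise Disjoint) :
    ∀ A ∈ C, ∃ B ∈ C', A ⊆ B :=
  always_contained_in_terminal_general φ h1 h2 m T C C' hC hC' htC'
end

section
/- Let s and t be nonempty finite subsets of ℝ² with s ∩ t = ∅ such that no three distinct points of s ∪ t are collinear, and let P = convexHull ℝ s and Q = convexHull ℝ t. If P and Q are weakly disjoint (i.e., P \ Q and Q \ P are both preconnected), then the set (frontier P) ∩ (frontier Q) has at most two points (its extended cardinality is at most 2). -/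
/-!
Suppose `∂P ∩ ∂Q` contains three points. They are not collinear: the middle one would lie on an
edge of `P` and on an edge of `Q` both containing the outer two, and general position forbids two
such edges on one line. So the triangle they span has an interior point `o ∈ interior P ∩ Q`, and
radial projection from `o` maps `P \ Q` onto `∂P \ Q`, which is therefore preconnected. At a
common boundary point the edges of `P` and `Q` through it cross transversally (general position
again), so every common boundary point lies in `closure (∂P \ Q) \ (∂P \ Q)`. But
`∂P`, parametrised by the argument around `o`, is a circle, and a preconnected subset `A` of a
circle has at most two points in `closure A \ A`.
-/

open Set Topology

theorem Set.exists_three_mem_of_two_lt_encard {α : Type*} {s : Set α} (hs : 2 < s.encard) :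
    ∃ x ∈ s, ∃ y ∈ s, ∃ z ∈ s, x ≠ y ∧ x ≠ z ∧ y ≠ z := by
  obtain ⟨t, hts, ht⟩ := exists_subset_encard_eq (Order.add_one_le_of_lt hs)
  obtain ⟨x, y, z, hxy, hxz, hyz, rfl⟩ := encard_eq_three.1 ht
  exact ⟨x, hts (by simp), y, hts (by simp), z, hts (by simp), hxy, hxz, hyz⟩

theorem IsPreconnected.subset_Ioo_of_mem_closure_diff {α : Type*} [LinearOrder α]
    [TopologicalSpace α] [OrderClosedTopology α] {I : Set α} (hI : IsPreconnected I) {a b : α}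
    (ha : a ∈ closure I \ I) (hb : b ∈ closure I \ I) (hab : a < b) : I ⊆ Ioo a b := by
  intro x hx
  obtain ⟨y, hya, hyI⟩ := mem_closure_iff.1 hb.1 (Ioi a) isOpen_Ioi hab
  obtain ⟨z, hzb, hzI⟩ := mem_closure_iff.1 ha.1 (Iio b) isOpen_Iio hab
  constructor
  · by_contra! hxa
    exact ha.2 (hI.Icc_subset hx hyI ⟨hxa, le_of_lt hya⟩)
  · by_contra! hbx
    exact hb.2 (hI.Icc_subset hzI hx ⟨le_of_lt hzb, hbx⟩)

theorem Complex.cos_mul_norm_le_re {z : ℂ} {M : ℝ} (hM : M ≤ Real.pi) (hz : |z.arg| ≤ M) :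
    Real.cos M * ‖z‖ ≤ z.re := by
  rw [← Complex.norm_mul_cos_arg, mul_comm, ← Real.cos_abs z.arg]
  exact mul_le_mul_of_nonneg_left
    (Real.cos_le_cos_of_nonneg_of_le_pi (abs_nonneg _) hM hz) (norm_nonneg z)

theorem IsPreconnected.eq_of_mem_closure_diff_of_injOn_arg {X : Type*} [TopologicalSpace X]
    {u : X → ℂ} (hu : Continuous u) {A : Set X} (hA : IsPreconnected A)
    (hu0 : ∀ x ∈ closure A, u x ≠ 0) (hinj : InjOn (Complex.arg ∘ u) (closure A))
    {x₁ x₂ x₃ : X} (h₁ : x₁ ∈ closure A \ A) (h₂ : x₂ ∈ closure A \ A) (h₃ : x₃ ∈ closure A \ A)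
    (h₂₁ : x₂ ≠ x₁) (h₃₁ : x₃ ≠ x₁) (hπ : (u x₁).arg = Real.pi) : x₂ = x₃ := by
  set θ := Complex.arg ∘ u
  have hθ : ∀ x ∈ closure A, x ≠ x₁ → ContinuousAt θ x := fun x hx hne =>
    (Complex.continuousAt_arg (Complex.mem_slitPlane_iff_arg.2
      ⟨fun h => hne (hinj hx h₁.1 (h.trans hπ.symm)), hu0 x hx⟩)).comp hu.continuousAt
  have hI : IsPreconnected (θ '' A) := hA.image θ fun x hx =>
    (hθ x (subset_closure hx) (fun h => h₁.2 (h ▸ hx))).continuousWithinAt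
  have hend : ∀ x ∈ closure A \ A, x ≠ x₁ → θ x ∈ closure (θ '' A) \ θ '' A :=
    fun x hx hne => ⟨(hθ x hx.1 hne).continuousWithinAt.mem_closure_image hx.1,
      fun ⟨y, hy, hyx⟩ => hx.2 (hinj (subset_closure hy) hx.1 hyx ▸ hy)⟩
  by_contra h₂₃
  wlog hlt : θ x₂ < θ x₃ generalizing x₂ x₃
  · exact this h₃ h₂ h₃₁ h₂₁ (Ne.symm h₂₃)
      (lt_of_le_of_ne (not_lt.1 hlt) fun h => h₂₃ (hinj h₂.1 h₃.1 h.symm))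
  have hIoo := hI.subset_Ioo_of_mem_closure_diff (hend x₂ h₂ h₂₁) (hend x₃ h₃ h₃₁) hlt
  -- `A` lies in the closed sector `|arg| ≤ M` with `M < π`, which misses the ray of `u x₁`
  have hlo : -Real.pi < θ x₂ := Complex.neg_pi_lt_arg _
  have hhi : θ x₃ < Real.pi := lt_of_le_of_ne (Complex.arg_le_pi _) fun h =>
    h₃₁ (hinj h₃.1 h₁.1 (h.trans hπ.symm))
  set M := max (-θ x₂) (θ x₃)
  have hM₂ : -θ x₂ ≤ M := le_max_left _ _
  have hM₃ : θ x₃ ≤ M := le_max_right _ _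
  have hMπ : M < Real.pi := max_lt (by linarith) hhi
  have hsector : A ⊆ {x | Real.cos M * ‖u x‖ ≤ (u x).re} := fun x hx => by
    obtain ⟨hxlo, hxhi⟩ := hIoo (mem_image_of_mem θ hx)
    exact Complex.cos_mul_norm_le_re hMπ.le
      (abs_le.2 ⟨(by linarith : -M ≤ θ x), (by linarith : θ x ≤ M)⟩)
  have hx₁ := closure_minimal hsector
    (isClosed_le (by fun_prop) (Complex.continuous_re.comp hu)) h₁.1
  have hre : (u x₁).re = -‖u x₁‖ := by
    rw [← Complex.norm_mul_cos_arg, hπ, Real.cos_pi, mul_neg_one]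
  have hcos : -1 < Real.cos M := by
    rw [← Real.cos_pi]
    exact Real.cos_lt_cos_of_nonneg_of_le_pi (by linarith) le_rfl hMπ
  have hpos : 0 < ‖u x₁‖ := norm_pos_iff.2 (hu0 x₁ h₁.1)
  simp only [mem_ofPred_eq, hre] at hx₁
  nlinarith

theorem affineSpan_pair_le_of_mem_segment {E : Type*} [AddCommGroup E] [Module ℝ E]
    {p q u v : E} (hp : p ∈ segment ℝ u v) (hq : q ∈ segment ℝ u v) (hpq : p ≠ q) :
    line[ℝ, u, v] ≤ line[ℝ, p, q] := by
  have hcol : Collinear ℝ {p, q, u, v} := collinear_insert_insert_of_mem_affineSpan_pair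
    (mem_segment_iff_wbtw.1 hp).mem_affineSpan (mem_segment_iff_wbtw.1 hq).mem_affineSpan
  exact affineSpan_pair_le_of_mem_of_mem
    (hcol.mem_affineSpan_of_mem_of_ne (by simp) (by simp) (by simp) hpq)
    (hcol.mem_affineSpan_of_mem_of_ne (by simp) (by simp) (by simp) hpq)

section Convex

variable {E : Type*} [NormedAddCommGroup E] [NormedSpace ℝ E]

theorem Convex.exists_forall_le_of_notMem_interior [FiniteDimensional ℝ E] {C : Set E} {x : E}
    (hC : Convex ℝ C) (hxC : x ∈ C) (hx : x ∉ interior C) :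
    ∃ f : StrongDual ℝ E, f ≠ 0 ∧ ∀ y ∈ C, f y ≤ f x := by
  by_cases hint : (interior C).Nonempty
  · exact geometric_hahn_banach_of_nonempty_interior_point hC hx hint
  -- otherwise `C` lies in a proper affine subspace, on which some nonzero functional is constant
  have hspan : vectorSpan ℝ C < ⊤ := by
    rwa [lt_top_iff_ne_top, Ne,
      ← AffineSubspace.affineSpan_eq_top_iff_vectorSpan_eq_top_of_nonempty ℝ E E ⟨x, hxC⟩,
      ← hC.interior_nonempty_iff_affineSpan_eq_top]
  obtain ⟨f, hf0, hker⟩ := (vectorSpan ℝ C).exists_le_ker_of_lt_top hspan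
  refine ⟨LinearMap.toContinuousLinearMap f, by simpa using hf0, fun y hy => ?_⟩
  have : f (y - x) = 0 := hker (vsub_mem_vectorSpan ℝ hy hxC)
  rw [map_sub, sub_eq_zero] at this
  exact this.le

theorem IsExposed.eq_convexHull_inter {s B : Set E} (hs : s.Finite)
    (hB : IsExposed ℝ (convexHull ℝ s) B) : B = convexHull ℝ (B ∩ s) := by
  have hBconv := hB.convex (convex_convexHull ℝ s)
  refine Subset.antisymm ?_ (convexHull_min inter_subset_left hBconv)
  have hext : extremePoints ℝ B ⊆ B ∩ s := fun y hy => ⟨extremePoints_subset hy,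
    extremePoints_convexHull_subset (hB.isExtreme.extremePoints_subset_extremePoints hy)⟩
  have hBc := hB.isCompact (hs.isCompact_convexHull ℝ)
  calc B = closure (convexHull ℝ (extremePoints ℝ B)) :=
        (closure_convexHull_extremePoints hBc hBconv).symm
    _ ⊆ closure (convexHull ℝ (B ∩ s)) := closure_mono (convexHull_mono hext)
    _ = convexHull ℝ (B ∩ s) :=
        ((hs.subset inter_subset_right).isClosed_convexHull ℝ).closure_eq

theorem ContinuousLinearMap.toExposed_subset_frontier {f : StrongDual ℝ E} (hf : f ≠ 0)
    (C : Set E) : f.toExposed C ⊆ frontier C := fun x ⟨hxC, hmax⟩ =>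
  ⟨subset_closure hxC, fun hint => hf <| (IsMaxOn.isLocalMax (show IsMaxOn f C x from hmax)
    (mem_interior_iff_mem_nhds.1 hint)).hasFDerivAt_eq_zero f.hasFDerivAt⟩

theorem Convex.eq_of_mem_frontier_of_sameRay {C : Set E} (hC : Convex ℝ C) {o x y : E}
    (ho : o ∈ interior C) (hx : x ∈ frontier C) (hy : y ∈ frontier C)
    (h : SameRay ℝ (x - o) (y - o)) : x = y := by
  have one_le : ∀ {x y : E}, y ∈ frontier C → ∀ r : ℝ, 0 ≤ r → r • (x - o) = y - o →
      x ∈ frontier C → 1 ≤ r := by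
    intro x y hy r hr0 hr hx
    by_contra! hr1
    have hyo : y = (1 - r) • o + r • x := by
      rw [← sub_add_cancel y o, ← hr]; module
    exact hy.2 (hyo ▸ hC.combo_interior_closure_mem_interior ho hx.1 (by linarith) hr0 (by ring))
  have hxo : x - o ≠ 0 := sub_ne_zero.2 fun h => hx.2 (h ▸ ho)
  obtain ⟨r, hr0, hr⟩ := h.exists_nonneg_left hxo
  have h1 := one_le hy r hr0 hr hx
  have h2 := one_le hx r⁻¹ (inv_nonneg.2 hr0)
    (by rw [← hr, smul_smul, inv_mul_cancel₀ (by positivity), one_smul]) hy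
  have : r = 1 := le_antisymm (by rwa [one_le_inv₀ (by positivity)] at h2) h1
  rw [this, one_smul, sub_left_inj] at hr
  exact hr

theorem mem_closure_diff_of_segment_subset {S Q : Set E} {x y : E} (g : StrongDual ℝ E)
    (hxy : segment ℝ x y ⊆ S) (hQ : ∀ z ∈ Q, g z ≤ g x) (hlt : g x < g y) :
    x ∈ closure (S \ Q) := by
  have hopen : openSegment ℝ x y ⊆ S \ Q := by
    rintro _ ⟨a, b, ha, hb, hab, rfl⟩
    refine ⟨hxy (openSegment_subset_segment ℝ x y ⟨a, b, ha, hb, hab, rfl⟩), fun hz => ?_⟩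
    have hgz := hQ _ hz
    simp only [map_add, map_smul, smul_eq_mul] at hgz
    have : b * (g y - g x) ≤ 0 := by linear_combination hgz - g x * hab
    exact this.not_gt (mul_pos hb (sub_pos.2 hlt))
  exact closure_mono hopen (segment_subset_closure_openSegment (left_mem_segment ℝ x y))

theorem IsPreconnected.frontier_diff {P Q : Set E} (h : IsPreconnected (P \ Q))
    (hPc : IsCompact P) (hP : Convex ℝ P) (hQ : Convex ℝ Q) {o : E} (hoP : o ∈ interior P)
    (hoQ : o ∈ Q) : IsPreconnected (frontier P \ Q) := by
  set P₀ := (o + ·) ⁻¹' P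
  have hP₀ : P₀ ∈ 𝓝 0 := (continuous_const_add o).continuousAt.preimage_mem_nhds
    (by simpa using mem_interior_iff_mem_nhds.1 hoP)
  have hconv₀ : Convex ℝ P₀ := hP.translate_preimage_right o
  have hbdd₀ : Bornology.IsVonNBounded ℝ P₀ := NormedSpace.isVonNBounded_of_isBounded ℝ
    ((Homeomorph.addLeft o).isCompact_preimage.2 hPc).isBounded
  -- `ρ` is the gauge of `P` centred at `o`, and `r` the radial projection onto `frontier P`
  set ρ : E → ℝ := fun y => gauge P₀ (y - o)
  have hρ_pos : ∀ y ≠ o, 0 < ρ y := fun y hy =>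
    (gauge_pos (absorbent_nhds_zero hP₀) hbdd₀).2 (sub_ne_zero.2 hy)
  have hρ_one : ∀ y, ρ y = 1 ↔ y ∈ frontier P := fun y => by
    rw [gauge_eq_one_iff_mem_frontier hconv₀ hP₀]
    change y - o ∈ frontier ((Homeomorph.addLeft o) ⁻¹' P) ↔ _
    rw [← Homeomorph.preimage_frontier]
    simp
  set r : E → E := fun y => o + (ρ y)⁻¹ • (y - o)
  have hr_sub : ∀ y, r y - o = (ρ y)⁻¹ • (y - o) := fun y => add_sub_cancel_left o _
  have hr_frontier : ∀ y ≠ o, r y ∈ frontier P := fun y hy => by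
    rw [← hρ_one]
    change gauge P₀ (r y - o) = 1
    rw [hr_sub, gauge_smul_of_nonneg (inv_nonneg.2 (hρ_pos y hy).le), smul_eq_mul,
      inv_mul_cancel₀ (hρ_pos y hy).ne']
  have hne : ∀ y ∈ P \ Q, y ≠ o := fun y hy h => hy.2 (h ▸ hoQ)
  have himg : r '' (P \ Q) = frontier P \ Q := by
    refine Subset.antisymm ?_ fun y hy => ⟨y, ⟨hPc.isClosed.frontier_subset hy.1, hy.2⟩, ?_⟩
    · rintro _ ⟨y, hy, rfl⟩
      refine ⟨hr_frontier y (hne y hy), fun hrQ => hy.2 ?_⟩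
      -- `y` lies on the segment from `o` to `r y`, both in `Q`
      have hρ1 : ρ y ≤ 1 := gauge_le_one_of_mem (by simpa [P₀] using hy.1)
      have hy_eq : (1 - ρ y) • o + ρ y • r y = y := by
        rw [← sub_add_cancel (r y) o, hr_sub, smul_add, smul_smul,
          mul_inv_cancel₀ (hρ_pos y (hne y hy)).ne']
        module
      exact hy_eq ▸ hQ hoQ hrQ (by linarith) (hρ_pos y (hne y hy)).le (by ring)
    · change o + (ρ y)⁻¹ • (y - o) = y
      rw [(hρ_one y).2 hy.1, inv_one, one_smul, add_sub_cancel]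
  rw [← himg]
  refine h.image r fun y hy => ContinuousAt.continuousWithinAt ?_
  have hρ_cont : Continuous ρ := (continuous_gauge hconv₀ hP₀).comp (by fun_prop)
  exact continuousAt_const.add
    (((hρ_cont.continuousAt).inv₀ (hρ_pos y (hne y hy)).ne').smul (by fun_prop))

theorem collinear_of_forall_apply_eq [FiniteDimensional ℝ E] [Fact (Module.finrank ℝ E = 2)]
    {f : StrongDual ℝ E} (hf : f ≠ 0) {S : Set E} {c : ℝ} (hS : ∀ y ∈ S, f y = c) :
    Collinear ℝ S := by
  have hker : vectorSpan ℝ S ≤ LinearMap.ker (f : E →ₗ[ℝ] ℝ) := by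
    rw [vectorSpan_def, Submodule.span_le]
    rintro _ ⟨p, hp, q, hq, rfl⟩
    simp [hS p hp, hS q hq]
  have hdim := Module.Dual.finrank_ker_add_one_of_ne_zero (f := (f : E →ₗ[ℝ] ℝ))
    (fun h0 => hf (ContinuousLinearMap.coe_injective h0))
  rw [Fact.out (p := Module.finrank ℝ E = 2)] at hdim
  rw [collinear_iff_finrank_le_one]
  exact (Submodule.finrank_mono hker).trans (by omega)

theorem interior_convexHull_nonempty_of_not_collinear [FiniteDimensional ℝ E]
    [Fact (Module.finrank ℝ E = 2)] {a b c : E} (h : ¬ Collinear ℝ {a, b, c}) :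
    (interior (convexHull ℝ {a, b, c})).Nonempty := by
  rw [interior_convexHull_nonempty_iff_affineSpan_eq_top]
  have := (affineIndependent_iff_not_collinear_set.2 h
    ).affineSpan_eq_top_iff_card_eq_finrank_add_one.2
      (by simp [Fact.out (p := Module.finrank ℝ E = 2)])
  rwa [Matrix.range_cons, Matrix.range_cons, Matrix.range_cons, Matrix.range_empty,
    union_empty, singleton_union, singleton_union] at this

theorem Convex.interior_inter_nonempty_of_not_collinear [FiniteDimensional ℝ E]
    [Fact (Module.finrank ℝ E = 2)] {P Q : Set E} (hP : Convex ℝ P) (hQ : Convex ℝ Q)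
    {a b c : E} (h : ¬ Collinear ℝ {a, b, c}) (habc : {a, b, c} ⊆ P ∩ Q) :
    (interior P ∩ Q).Nonempty := by
  obtain ⟨o, ho⟩ := interior_convexHull_nonempty_of_not_collinear h
  exact ⟨o, interior_mono (hP.convexHull_subset_iff.2 (habc.trans inter_subset_left)) ho,
    hQ.convexHull_subset_iff.2 (habc.trans inter_subset_right) (interior_subset ho)⟩

end Convex

theorem IsPreconnected.encard_closure_diff_le_two {P A : Set (ℝ × ℝ)} (hA : IsPreconnected A)
    (hAP : A ⊆ frontier P) (hP : Convex ℝ P) {o : ℝ × ℝ} (ho : o ∈ interior P) :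
    (closure A \ A).encard ≤ 2 := by
  by_contra! h
  obtain ⟨x₁, h₁, x₂, h₂, x₃, h₃, h₁₂, h₁₃, h₂₃⟩ := Set.exists_three_mem_of_two_lt_encard h
  have hcl : closure A ⊆ frontier P := closure_minimal hAP isClosed_frontier
  set ζ : (ℝ × ℝ) ≃L[ℝ] ℂ := Complex.equivRealProdCLM.symm
  have hζ : ∀ y ∈ frontier P, ζ (y - o) ≠ 0 := fun y hy h0 => by
    rw [ζ.map_eq_zero_iff, sub_eq_zero] at h0
    exact hy.2 (h0 ▸ ho)
  have hζ₁ := hζ x₁ (hcl h₁.1)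
  -- `y - o` as a complex number, rotated so that `x₁` lies on the branch cut of `arg`
  set u : ℝ × ℝ → ℂ := fun y => -(ζ (y - o) / ζ (x₁ - o))
  refine h₂₃ (hA.eq_of_mem_closure_diff_of_injOn_arg (u := u) (by fun_prop)
    (fun y hy => neg_ne_zero.2 (div_ne_zero (hζ y (hcl hy)) hζ₁))
    (fun y₁ hy₁ y₂ hy₂ harg => ?_) h₁ h₂ h₃ h₁₂.symm h₁₃.symm ?_)
  · have hray : SameRay ℝ (u y₁) (u y₂) := Complex.sameRay_iff.2 (Or.inr (Or.inr harg))
    refine hP.eq_of_mem_frontier_of_sameRay ho (hcl hy₁) (hcl hy₂) ?_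
    let L : ℂ →ₗ[ℝ] (ℝ × ℝ) := ζ.symm.toLinearMap ∘ₗ LinearMap.mulRight ℝ (-ζ (x₁ - o))
    have hL : ∀ y, L (u y) = y - o := fun y => by
      change ζ.symm (-(ζ (y - o) / ζ (x₁ - o)) * -ζ (x₁ - o)) = y - o
      rw [neg_mul_neg, div_mul_cancel₀ _ hζ₁, ContinuousLinearEquiv.symm_apply_apply]
    simpa only [hL] using hray.map L
  · change (-(ζ (x₁ - o) / ζ (x₁ - o))).arg = Real.pi
    rw [div_self hζ₁, Complex.arg_neg_one]

def NoThreeCollinear {E : Type*} [AddCommGroup E] [Module ℝ E] (S : Set E) : Prop :=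
  ∀ p q r : E, p ∈ S → q ∈ S → r ∈ S → p ≠ q → q ≠ r → p ≠ r → ¬ Collinear ℝ ({p, q, r} : Set E)

namespace NoThreeCollinear

section Module

variable {E : Type*} [AddCommGroup E] [Module ℝ E] {S T : Set E}

theorem mono (h : NoThreeCollinear S) (hTS : T ⊆ S) : NoThreeCollinear T :=
  fun p q r hp hq hr => h p q r (hTS hp) (hTS hq) (hTS hr)

theorem eq_or_eq_of_mem_segment (h : NoThreeCollinear S) {x w z : E} (hx : x ∈ S) (hw : w ∈ S)
    (hz : z ∈ S) (hxwz : x ∈ segment ℝ w z) : x = w ∨ x = z := by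
  by_contra! hne
  have hwz : w ≠ z := by rintro rfl; exact hne.1 (by simpa using hxwz)
  refine h x w z hx hw hz hne.1 hwz hne.2 ?_
  rw [insert_comm]
  exact (mem_segment_iff_wbtw.1 hxwz).collinear

theorem exists_convexHull_eq_segment (h : NoThreeCollinear S) (hTS : T ⊆ S)
    (hT : Collinear ℝ T) (hTf : T.Finite) (hTne : T.Nonempty) :
    ∃ u ∈ T, ∃ v ∈ T, convexHull ℝ T = segment ℝ u v := by
  have hcard : T.ncard ≤ 2 := by
    by_contra! hcard
    obtain ⟨a, b, c, ha, hb, hc, hab, hac, hbc⟩ := (Set.two_lt_ncard_iff hTf).1 hcard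
    exact h a b c (hTS ha) (hTS hb) (hTS hc) hab hbc hac
      (hT.subset (insert_subset ha (insert_subset hb (singleton_subset_iff.2 hc))))
  obtain h1 | h2 : T.ncard = 1 ∨ T.ncard = 2 := by
    have := (Set.ncard_pos hTf).2 hTne
    omega
  · obtain ⟨u, rfl⟩ := Set.ncard_eq_one.1 h1
    exact ⟨u, rfl, u, rfl, by simp⟩
  · obtain ⟨u, v, -, rfl⟩ := Set.ncard_eq_two.1 h2
    exact ⟨u, by simp, v, by simp, convexHull_pair u v⟩

end Module

variable {E : Type*} [NormedAddCommGroup E] [NormedSpace ℝ E] [FiniteDimensional ℝ E]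
  [Fact (Module.finrank ℝ E = 2)] {S : Set E}

theorem exists_toExposed_eq_segment (h : NoThreeCollinear S) (hS : S.Finite) {x : E}
    (hx : x ∈ frontier (convexHull ℝ S)) :
    ∃ f : StrongDual ℝ E, f ≠ 0 ∧ x ∈ f.toExposed (convexHull ℝ S) ∧
      ∃ u ∈ S, ∃ v ∈ S, f.toExposed (convexHull ℝ S) = segment ℝ u v := by
  have hxP : x ∈ convexHull ℝ S := (hS.isClosed_convexHull ℝ).frontier_subset hx
  obtain ⟨f, hf0, hf⟩ := (convex_convexHull ℝ S).exists_forall_le_of_notMem_interior hxP hx.2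
  set F := f.toExposed (convexHull ℝ S)
  have hxF : x ∈ F := ⟨hxP, hf⟩
  have hF : F = convexHull ℝ (F ∩ S) :=
    ContinuousLinearMap.toExposed.isExposed.eq_convexHull_inter hS
  have hlevel : ∀ y ∈ F ∩ S, f y = f x := fun y hy =>
    le_antisymm (hf y (subset_convexHull ℝ S hy.2)) (hy.1.2 x hxP)
  have hne : (F ∩ S).Nonempty := by
    rw [← convexHull_nonempty_iff (𝕜 := ℝ), ← hF]
    exact ⟨x, hxF⟩
  obtain ⟨u, hu, v, hv, huv⟩ := h.exists_convexHull_eq_segment inter_subset_right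
    (collinear_of_forall_apply_eq hf0 hlevel) (hS.subset inter_subset_right) hne
  exact ⟨f, hf0, hxF, u, hu.2, v, hv.2, hF.trans huv⟩

theorem exists_affineSpan_pair_le_of_sbtw (h : NoThreeCollinear S) (hS : S.Finite)
    {p m q : E} (hp : p ∈ convexHull ℝ S) (hm : m ∈ frontier (convexHull ℝ S))
    (hq : q ∈ convexHull ℝ S) (hpmq : Sbtw ℝ p m q) :
    ∃ u ∈ S, ∃ v ∈ S, u ≠ v ∧ line[ℝ, u, v] ≤ line[ℝ, p, q] := by
  obtain ⟨f, -, hmF, u, hu, v, hv, hF⟩ := h.exists_toExposed_eq_segment hS hm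
  have hmo : m ∈ openSegment ℝ p q := mem_openSegment_of_ne_left_right hpmq.2.1.symm
    hpmq.2.2.symm (mem_segment_iff_wbtw.2 hpmq.1)
  have hext : IsExtreme ℝ (convexHull ℝ S) (f.toExposed (convexHull ℝ S)) :=
    ContinuousLinearMap.toExposed.isExposed.isExtreme
  have hpF : p ∈ segment ℝ u v := hF ▸ hext.left_mem_of_mem_openSegment hp hq hmF hmo
  have hqF : q ∈ segment ℝ u v := hF ▸ hext.right_mem_of_mem_openSegment hp hq hmF hmo
  refine ⟨u, hu, v, hv, ?_, affineSpan_pair_le_of_mem_segment hpF hqF hpmq.left_ne_right⟩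
  rintro rfl
  rw [segment_same, mem_singleton_iff] at hpF hqF
  exact hpmq.left_ne_right (hpF.trans hqF.symm)

variable {s t : Set E}

theorem not_sbtw_of_mem_frontier_inter (h : NoThreeCollinear (s ∪ t)) (hs : s.Finite)
    (ht : t.Finite) (hst : Disjoint s t) {p m q : E}
    (hp : p ∈ frontier (convexHull ℝ s) ∩ frontier (convexHull ℝ t))
    (hm : m ∈ frontier (convexHull ℝ s) ∩ frontier (convexHull ℝ t))
    (hq : q ∈ frontier (convexHull ℝ s) ∩ frontier (convexHull ℝ t)) : ¬ Sbtw ℝ p m q := by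
  intro hpmq
  have hmem : ∀ {S : Set E}, S.Finite → ∀ {y}, y ∈ frontier (convexHull ℝ S) →
      y ∈ convexHull ℝ S := fun hS _ hy => (hS.isClosed_convexHull ℝ).frontier_subset hy
  obtain ⟨u, hu, v, hv, huv, hs_line⟩ := (h.mono subset_union_left
    ).exists_affineSpan_pair_le_of_sbtw hs (hmem hs hp.1) hm.1 (hmem hs hq.1) hpmq
  obtain ⟨w, hw, z, -, -, ht_line⟩ := (h.mono subset_union_right
    ).exists_affineSpan_pair_le_of_sbtw ht (hmem ht hp.2) hm.2 (hmem ht hq.2) hpmq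
  exact h u v w (Or.inl hu) (Or.inl hv) (Or.inr hw) huv (hst.ne_of_mem hv hw)
    (hst.ne_of_mem hu hw) (collinear_triple_of_mem_affineSpan_pair
      (hs_line (left_mem_affineSpan_pair ℝ u v))
      (hs_line (right_mem_affineSpan_pair ℝ u v)) (ht_line (left_mem_affineSpan_pair ℝ w _)))

theorem not_collinear_of_mem_frontier_inter (h : NoThreeCollinear (s ∪ t)) (hs : s.Finite)
    (ht : t.Finite) (hst : Disjoint s t) {a b c : E}
    (ha : a ∈ frontier (convexHull ℝ s) ∩ frontier (convexHull ℝ t))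
    (hb : b ∈ frontier (convexHull ℝ s) ∩ frontier (convexHull ℝ t))
    (hc : c ∈ frontier (convexHull ℝ s) ∩ frontier (convexHull ℝ t))
    (hab : a ≠ b) (hac : a ≠ c) (hbc : b ≠ c) : ¬ Collinear ℝ {a, b, c} := fun hcol => by
  rcases hcol.wbtw_or_wbtw_or_wbtw with habc | hbca | hcab
  · exact h.not_sbtw_of_mem_frontier_inter hs ht hst ha hb hc ⟨habc, hab.symm, hbc⟩
  · exact h.not_sbtw_of_mem_frontier_inter hs ht hst hb hc ha ⟨hbca, hbc.symm, hac.symm⟩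
  · exact h.not_sbtw_of_mem_frontier_inter hs ht hst hc ha hb ⟨hcab, hac, hab⟩

theorem mem_closure_frontier_diff (h : NoThreeCollinear (s ∪ t)) (hs : s.Finite)
    (ht : t.Finite) (hst : Disjoint s t) {x : E} (hxs : x ∈ frontier (convexHull ℝ s))
    (hxt : x ∈ frontier (convexHull ℝ t)) :
    x ∈ closure (frontier (convexHull ℝ s) \ convexHull ℝ t) := by
  obtain ⟨f, hf0, hxF, u, hu, v, hv, hF⟩ :=
    (h.mono subset_union_left).exists_toExposed_eq_segment hs hxs
  obtain ⟨g, hg0, hxG, w, hw, z, hz, hG⟩ :=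
    (h.mono subset_union_right).exists_toExposed_eq_segment ht hxt
  have hxuv : x ∈ segment ℝ u v := hF ▸ hxF
  have hxs' : x ∉ s := fun hx => by
    rcases h.eq_or_eq_of_mem_segment (Or.inl hx) (Or.inr hw) (Or.inr hz) (hG ▸ hxG) with e | e
    exacts [hst.ne_of_mem hx hw e, hst.ne_of_mem hx hz e]
  have hxo : x ∈ openSegment ℝ u v := mem_openSegment_of_ne_left_right
    (fun e => hxs' (e ▸ hu)) (fun e => hxs' (e ▸ hv)) hxuv
  have huv : u ≠ v := by
    rintro rfl
    rw [segment_same, mem_singleton_iff] at hxuv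
    exact hxs' (hxuv ▸ hu)
  have hgx : g x ∈ openSegment ℝ (g u) (g v) := by
    obtain ⟨a, b, ha, hb, hab, hx⟩ := hxo
    exact ⟨a, b, ha, hb, hab, by rw [← hx, map_add, map_smul, map_smul]⟩
  -- otherwise `u`, `v` and `w` all lie on the line `g = g x`
  have hguv : g u ≠ g v := by
    intro hguv
    rw [hguv, openSegment_same, mem_singleton_iff] at hgx
    have hwG : w ∈ g.toExposed (convexHull ℝ t) := hG ▸ left_mem_segment ℝ w z
    have hgw : g w = g x := le_antisymm (hxG.2 w hwG.1) (hwG.2 x hxG.1)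
    refine h u v w (Or.inl hu) (Or.inl hv) (Or.inr hw) huv (hst.ne_of_mem hv hw)
      (hst.ne_of_mem hu hw) (collinear_of_forall_apply_eq hg0 (c := g x) ?_)
    simp only [mem_insert_iff, mem_singleton_iff, forall_eq_or_imp, forall_eq]
    exact ⟨hgx ▸ hguv, hgx.symm, hgw⟩
  have hseg : segment ℝ u v ⊆ frontier (convexHull ℝ s) :=
    hF ▸ f.toExposed_subset_frontier hf0 _
  rw [openSegment_eq_Ioo' hguv] at hgx
  rcases lt_max_iff.1 hgx.2 with hlt | hlt
  · exact mem_closure_diff_of_segment_subset g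
      (((convex_segment u v).segment_subset hxuv (left_mem_segment ℝ u v)).trans hseg) hxG.2 hlt
  · exact mem_closure_diff_of_segment_subset g
      (((convex_segment u v).segment_subset hxuv (right_mem_segment ℝ u v)).trans hseg) hxG.2 hlt

end NoThreeCollinear

instance : Fact (Module.finrank ℝ (ℝ × ℝ) = 2) := ⟨by simp⟩

theorem weakly_disjoint_boundaries_intersect_in_at_most_two_points_general
    (s t : Finset (ℝ × ℝ))
    (hst : (s : Set (ℝ × ℝ)) ∩ (t : Set (ℝ × ℝ)) = ∅)
    (hgen : ∀ p q r : ℝ × ℝ, p ∈ (s : Set (ℝ × ℝ)) ∪ (t : Set (ℝ × ℝ)) →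
      q ∈ (s : Set (ℝ × ℝ)) ∪ (t : Set (ℝ × ℝ)) →
      r ∈ (s : Set (ℝ × ℝ)) ∪ (t : Set (ℝ × ℝ)) →
      p ≠ q → q ≠ r → p ≠ r → ¬ Collinear ℝ ({p, q, r} : Set (ℝ × ℝ)))
    (P Q : Set (ℝ × ℝ))
    (hP : P = convexHull ℝ (s : Set (ℝ × ℝ)))
    (hQ : Q = convexHull ℝ (t : Set (ℝ × ℝ)))
    (hPQdiffConn : IsPreconnected (P \ Q)) :
    (frontier P ∩ frontier Q).encard ≤ 2 := by
  subst hP hQ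
  replace hgen : NoThreeCollinear ((s : Set (ℝ × ℝ)) ∪ t) := hgen
  have hdisj : Disjoint (s : Set (ℝ × ℝ)) t := disjoint_iff_inter_eq_empty.2 hst
  have hPc := s.finite_toSet.isCompact_convexHull ℝ
  have hQc := t.finite_toSet.isCompact_convexHull ℝ
  set P := convexHull ℝ (s : Set (ℝ × ℝ))
  set Q := convexHull ℝ (t : Set (ℝ × ℝ))
  by_contra! h
  obtain ⟨a, ha, b, hb, c, hc, hab, hac, hbc⟩ := Set.exists_three_mem_of_two_lt_encard h
  have hsub := inter_subset_inter hPc.isClosed.frontier_subset hQc.isClosed.frontier_subset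
  have habc : {a, b, c} ⊆ P ∩ Q := by
    simp only [insert_subset_iff, singleton_subset_iff]
    exact ⟨hsub ha, hsub hb, hsub hc⟩
  obtain ⟨o, hoP, hoQ⟩ := (convex_convexHull ℝ _).interior_inter_nonempty_of_not_collinear
    (convex_convexHull ℝ _) (hgen.not_collinear_of_mem_frontier_inter s.finite_toSet
      t.finite_toSet hdisj ha hb hc hab hac hbc) habc
  have hA := hPQdiffConn.frontier_diff hPc (convex_convexHull ℝ _) (convex_convexHull ℝ _) hoP hoQ
  have hX : frontier P ∩ frontier Q ⊆ closure (frontier P \ Q) \ (frontier P \ Q) := by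
    rintro x ⟨hxs, hxt⟩
    exact ⟨hgen.mem_closure_frontier_diff s.finite_toSet t.finite_toSet hdisj hxs hxt,
      fun hx => hx.2 (hQc.isClosed.frontier_subset hxt)⟩
  exact h.not_ge ((encard_mono hX).trans
    (hA.encard_closure_diff_le_two sdiff_subset (convex_convexHull ℝ _) hoP))

theorem weakly_disjoint_boundaries_intersect_in_at_most_two_points
    (s t : Finset (ℝ × ℝ)) (hs : s.Nonempty) (ht : t.Nonempty)
    (hst : (s : Set (ℝ × ℝ)) ∩ (t : Set (ℝ × ℝ)) = ∅)
    (hgen : ∀ p q r : ℝ × ℝ, p ∈ (s : Set (ℝ × ℝ)) ∪ (t : Set (ℝ × ℝ)) →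
      q ∈ (s : Set (ℝ × ℝ)) ∪ (t : Set (ℝ × ℝ)) →
      r ∈ (s : Set (ℝ × ℝ)) ∪ (t : Set (ℝ × ℝ)) →
      p ≠ q → q ≠ r → p ≠ r → ¬ Collinear ℝ ({p, q, r} : Set (ℝ × ℝ)))
    (P Q : Set (ℝ × ℝ))
    (hP : P = convexHull ℝ (s : Set (ℝ × ℝ)))
    (hQ : Q = convexHull ℝ (t : Set (ℝ × ℝ)))
    (hPQdiffConn : IsPreconnected (P \ Q))
    (hQPdiffConn : IsPreconnected (Q \ P)) :
    (frontier P ∩ frontier Q).encard ≤ 2 :=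
  weakly_disjoint_boundaries_intersect_in_at_most_two_points_general s t hst hgen P Q hP hQ
    hPQdiffConn
end

section
/- Let s and t be nonempty finite subsets of ℝ² with s ∩ t = ∅ such that no three distinct points of s ∪ t are collinear, and let P = convexHull ℝ s and Q = convexHull ℝ t. If P and Q are weakly disjoint (i.e., P \ Q and Q \ P are both preconnected) and P ∩ Q ≠ ∅, then some extreme point of P lies in Q or some extreme point of Q lies in P. -/
/-!
Suppose no extreme point of either set lies in the other. An extreme point of `P` lies outside `Q`,
so the segment joining it to a common point crosses `frontier Q` at some `e ∈ P`; let `ℓ` be a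
supporting line of `Q` at `e`. Then `P ∩ ℓ ⊆ Q`: for `p ∈ P ∩ ℓ` outside `Q`, the segment
`[e, p] ⊆ P` contains an endpoint of the face `Q ∩ ℓ`, an extreme point of `Q` (this is where `ℓ`
being a line is used). The extreme points of `P` maximising and minimising the functional defining
`ℓ` lie outside `Q`, hence strictly on either side of `ℓ`, and so `ℓ` disconnects `P \ Q`.
-/

open Set Module

theorem IsPreconnected.inter_frontier_nonempty {α : Type*} [TopologicalSpace α] {s t : Set α}
    (hs : IsPreconnected s) (hst : (s ∩ t).Nonempty) (hsdt : (s \ t).Nonempty) :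
    (s ∩ frontier t).Nonempty := by
  by_contra h
  have hcover : s ⊆ interior t ∪ (closure t)ᶜ := fun x hx => by
    by_cases hi : x ∈ interior t
    · exact Or.inl hi
    · exact Or.inr fun hc => h ⟨x, hx, hc, hi⟩
  obtain ⟨x, -, hxi, hxc⟩ := hs _ _ isOpen_interior isClosed_closure.isOpen_compl hcover
    (hst.imp fun x hx => ⟨hx.1, (hcover hx.1).resolve_right (not_not.2 (subset_closure hx.2))⟩)
    (hsdt.imp fun x hx => ⟨hx.1, (hcover hx.1).resolve_left fun hi => hx.2 (interior_subset hi)⟩)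
  exact hxc (subset_closure (interior_subset hxi))

theorem collinear_of_forall_apply_eq_s7 {K E : Type*} [Field K] [AddCommGroup E] [Module K E]
    [FiniteDimensional K E] (hE : finrank K E = 2) {f : Dual K E} (hf : f ≠ 0) {S : Set E}
    {c : K} (hS : ∀ x ∈ S, f x = c) : Collinear K S := by
  have hle : vectorSpan K S ≤ LinearMap.ker f := by
    rw [vectorSpan_def, Submodule.span_le]
    rintro _ ⟨x, hx, y, hy, rfl⟩
    simp [hS x hx, hS y hy]
  have := Submodule.finrank_mono hle
  have := Dual.finrank_ker_add_one_of_ne_zero hf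
  rw [collinear_iff_finrank_le_one]
  omega

section LocallyConvex

variable {E : Type*} [AddCommGroup E] [Module ℝ E] [TopologicalSpace E] [T2Space E]
  [IsTopologicalAddGroup E] [ContinuousSMul ℝ E] [LocallyConvexSpace ℝ E]

theorem IsCompact.exists_mem_extremePoints_isMaxOn {A : Set E} (hA : IsCompact A)
    (hne : A.Nonempty) (l : StrongDual ℝ E) : ∃ x ∈ A.extremePoints ℝ, IsMaxOn l A x := by
  have hexp : IsExposed ℝ A (l.toExposed A) := ContinuousLinearMap.toExposed.isExposed
  obtain ⟨z, hzA, hz⟩ := hA.exists_isMaxOn hne l.continuous.continuousOn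
  obtain ⟨x, hx⟩ := (hexp.isCompact hA).extremePoints_nonempty ⟨z, hzA, hz⟩
  exact ⟨x, hexp.isExtreme.extremePoints_subset_extremePoints hx, (extremePoints_subset hx).2⟩

theorem Convex.exists_mem_extremePoints_mem_segment {F : Set E} (hF : Convex ℝ F)
    (hFc : IsCompact F) {e p : E} (he : e ∈ F) (hp : p ∉ F) (hcol : Collinear ℝ (insert p F)) :
    ∃ q ∈ F.extremePoints ℝ, q ∈ segment ℝ e p := by
  obtain ⟨ψ, hψ⟩ := geometric_hahn_banach_point_point (ne_of_mem_of_not_mem he hp)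
  obtain ⟨q, hq, hmax⟩ := hFc.exists_mem_extremePoints_isMaxOn ⟨e, he⟩ ψ
  have hqF := extremePoints_subset hq
  refine ⟨q, hq, ?_⟩
  have heqp : Collinear ℝ ({e, q, p} : Set E) :=
    hcol.subset (by simp [insert_subset_iff, he, hqF])
  rcases heqp.wbtw_or_wbtw_or_wbtw with h | h | h
  · exact mem_segment_iff_wbtw.2 h
  · exact absurd (hF.segment_subset hqF he (mem_segment_iff_wbtw.2 h)) hp
  · -- `e ∈ [p, q]` forces `e = q`, since `ψ p > ψ e` and `ψ q ≥ ψ e`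
    obtain ⟨a, b, ha, hb, hab, hpqe⟩ := mem_segment_iff_wbtw.2 h
    obtain rfl : b = 1 - a := by linarith
    have hψe : ψ e = a * ψ p + (1 - a) * ψ q := by simp [← hpqe]
    have ha0 : a = 0 := by nlinarith [mul_le_mul_of_nonneg_left (isMaxOn_iff.1 hmax e he) hb]
    obtain rfl : q = e := by simpa [ha0] using hpqe
    exact left_mem_segment ℝ q p

end LocallyConvex

variable {E : Type*} [NormedAddCommGroup E] [NormedSpace ℝ E] [FiniteDimensional ℝ E]

theorem Convex.exists_ne_zero_isMaxOn_of_notMem_interior {A : Set E} (hA : Convex ℝ A) {x : E}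
    (hx : x ∈ A) (hxi : x ∉ interior A) : ∃ f : StrongDual ℝ E, f ≠ 0 ∧ IsMaxOn f A x := by
  by_cases hint : (interior A).Nonempty
  · exact geometric_hahn_banach_of_nonempty_interior_point hA hxi hint
  rw [hA.interior_nonempty_iff_affineSpan_eq_top,
    AffineSubspace.affineSpan_eq_top_iff_vectorSpan_eq_top_of_nonempty ℝ E E ⟨x, hx⟩] at hint
  obtain ⟨f, hf, hker⟩ := (vectorSpan ℝ A).exists_le_ker_of_lt_top (lt_top_iff_ne_top.2 hint)
  refine ⟨LinearMap.toContinuousLinearMap f, by simpa using hf, fun a ha => ?_⟩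
  have : f (a - x) = 0 := hker (vsub_mem_vectorSpan ℝ ha hx)
  simp only [map_sub, sub_eq_zero] at this
  simp [this]

theorem mem_of_apply_eq_of_isMaxOn (hE : finrank ℝ E = 2) {P Q : Set E} (hP : Convex ℝ P)
    (hQ : IsCompact Q) (hQc : Convex ℝ Q) (hQP : ∀ x ∈ Q.extremePoints ℝ, x ∉ P)
    {φ : StrongDual ℝ E} (hφ : φ ≠ 0) {e : E} (heP : e ∈ P) (heQ : e ∈ Q) (hmax : IsMaxOn φ Q e)
    {p : E} (hp : p ∈ P) (hpe : φ p = φ e) : p ∈ Q := by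
  by_contra hpQ
  have hF : IsExposed ℝ Q (φ.toExposed Q) := ContinuousLinearMap.toExposed.isExposed
  have heF : e ∈ φ.toExposed Q := ⟨heQ, hmax⟩
  have hcol : Collinear ℝ (insert p (φ.toExposed Q)) := by
    refine collinear_of_forall_apply_eq_s7 hE (f := φ.toLinearMap) (c := φ e)
      (fun h => hφ (ContinuousLinearMap.coe_injective h)) ?_
    rintro y (rfl | hy)
    · exact hpe
    · exact le_antisymm (hmax hy.1) (hy.2 e heQ)
  obtain ⟨q, hq, hqep⟩ := (hF.convex hQc).exists_mem_extremePoints_mem_segment (hF.isCompact hQ)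
    heF (fun h => hpQ h.1) hcol
  exact hQP q (hF.isExtreme.extremePoints_subset_extremePoints hq)
    (hP.segment_subset heP hp hqep)

theorem exists_extremePoints_mem_of_isPreconnected_diff (hE : finrank ℝ E = 2) {P Q : Set E}
    (hP : IsCompact P) (hPc : Convex ℝ P) (hQ : IsCompact Q) (hQc : Convex ℝ Q)
    (hconn : IsPreconnected (P \ Q)) (hPQ : (P ∩ Q).Nonempty) :
    (∃ x ∈ P.extremePoints ℝ, x ∈ Q) ∨ ∃ x ∈ Q.extremePoints ℝ, x ∈ P := by
  by_contra! ⟨hPQ', hQP⟩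
  obtain ⟨z, hzP, hzQ⟩ := hPQ
  obtain ⟨w, hw⟩ := hP.extremePoints_nonempty ⟨z, hzP⟩
  obtain ⟨e, hezw, heQ'⟩ := (convex_segment z w).isPreconnected.inter_frontier_nonempty
    ⟨z, left_mem_segment ℝ z w, hzQ⟩ ⟨w, right_mem_segment ℝ z w, hPQ' w hw⟩
  have heP : e ∈ P := hPc.segment_subset hzP (extremePoints_subset hw) hezw
  have heQ : e ∈ Q := hQ.isClosed.frontier_subset heQ'
  obtain ⟨φ, hφ, hmax⟩ := hQc.exists_ne_zero_isMaxOn_of_notMem_interior heQ heQ'.2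
  have hline : ∀ p ∈ P, φ p = φ e → p ∈ Q := fun p hp =>
    mem_of_apply_eq_of_isMaxOn hE hPc hQ hQc hQP hφ heP heQ hmax hp
  obtain ⟨x, hx, hxmax⟩ := hP.exists_mem_extremePoints_isMaxOn ⟨z, hzP⟩ φ
  obtain ⟨y, hy, hymin⟩ := hP.exists_mem_extremePoints_isMaxOn ⟨z, hzP⟩ (-φ)
  have hxP := extremePoints_subset hx
  have hyP := extremePoints_subset hy
  have hex : φ e < φ x := (hxmax heP).lt_of_ne fun h => hPQ' x hx (hline x hxP h.symm)
  have hye : φ y < φ e :=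
    (neg_le_neg_iff.1 (hymin heP)).lt_of_ne fun h => hPQ' y hy (hline y hyP h)
  obtain ⟨u, -, hu₁, hu₂⟩ := hconn {u | φ e < φ u} {u | φ u < φ e}
    (isOpen_lt continuous_const φ.continuous) (isOpen_lt φ.continuous continuous_const)
    (fun u hu => (Ne.lt_or_gt fun h => hu.2 (hline u hu.1 h)).symm)
    ⟨x, ⟨hxP, hPQ' x hx⟩, hex⟩ ⟨y, ⟨hyP, hPQ' y hy⟩, hye⟩
  exact lt_asymm (show φ e < φ u from hu₁) hu₂

theorem weakly_disjoint_one_contains_vertex_of_other_general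
    (s t : Finset (ℝ × ℝ))
    (P Q : Set (ℝ × ℝ))
    (hP : P = convexHull ℝ (s : Set (ℝ × ℝ)))
    (hQ : Q = convexHull ℝ (t : Set (ℝ × ℝ)))
    (hPQdiffConn : IsPreconnected (P \ Q))
    (hinter : (P ∩ Q).Nonempty) :
    (∃ x ∈ Set.extremePoints ℝ P, x ∈ Q) ∨
    (∃ x ∈ Set.extremePoints ℝ Q, x ∈ P) := by
  subst hP hQ
  exact exists_extremePoints_mem_of_isPreconnected_diff (by simp)
    (s.finite_toSet.isCompact_convexHull ℝ) (convex_convexHull ℝ _)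
    (t.finite_toSet.isCompact_convexHull ℝ) (convex_convexHull ℝ _) hPQdiffConn hinter

theorem weakly_disjoint_one_contains_vertex_of_other
    (s t : Finset (ℝ × ℝ)) (hs : s.Nonempty) (ht : t.Nonempty)
    (hst : (s : Set (ℝ × ℝ)) ∩ (t : Set (ℝ × ℝ)) = ∅)
    (hgen : ∀ p q r : ℝ × ℝ, p ∈ (s : Set (ℝ × ℝ)) ∪ (t : Set (ℝ × ℝ)) →
      q ∈ (s : Set (ℝ × ℝ)) ∪ (t : Set (ℝ × ℝ)) →
      r ∈ (s : Set (ℝ × ℝ)) ∪ (t : Set (ℝ × ℝ)) →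
      p ≠ q → q ≠ r → p ≠ r → ¬ Collinear ℝ ({p, q, r} : Set (ℝ × ℝ)))
    (P Q : Set (ℝ × ℝ))
    (hP : P = convexHull ℝ (s : Set (ℝ × ℝ)))
    (hQ : Q = convexHull ℝ (t : Set (ℝ × ℝ)))
    (hPQdiffConn : IsPreconnected (P \ Q))
    (hQPdiffConn : IsPreconnected (Q \ P))
    (hinter : (P ∩ Q).Nonempty) :
    (∃ x ∈ Set.extremePoints ℝ P, x ∈ Q) ∨
    (∃ x ∈ Set.extremePoints ℝ Q, x ∈ P) :=
  weakly_disjoint_one_contains_vertex_of_other_general s t P Q hP hQ hPQdiffConn hinter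
end

section
/- Let R and S be two disjoint geometric trees in ℝ² (each a nonempty compact connected finite union of closed straight-line segments) whose vertices are in general position, meaning no three vertices of R and S together are collinear and no vertex of one tree lies on the frontier of the convex hull of the other. If convexHull ℝ R ∩ convexHull ℝ S ≠ ∅, then at least one of the following holds: (i) convexHull ℝ R ⊆ interior (convexHull ℝ S); (ii) convexHull ℝ S ⊆ interior (convexHull ℝ R); (iii) there exist two adjacent hull vertices p, q of convexHull ℝ S with openSegment ℝ p q ∩ R ≠ ∅; (iv) there exist two adjacent hull vertices p, q of convexHull ℝ R with openSegment ℝ p q ∩ S ≠ ∅. -/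
/-- `p` and `q` are adjacent hull vertices of the convex polygon `P`:
they are distinct extreme points of `P` and the closed segment between them
lies in the frontier of `P` (i.e., `[p, q]` is an edge of `P`). -/
def AdjacentHullVertices (P : Set (ℝ × ℝ)) (p q : ℝ × ℝ) : Prop :=
  p ≠ q ∧ p ∈ Set.extremePoints ℝ P ∧ q ∈ Set.extremePoints ℝ P ∧
    segment ℝ p q ⊆ frontier P

/-!
If `R` meets the frontier of `conv S` at a point `y`, then `y ∉ S`, so `y` is not a vertex of
`conv S`: it lies inside an edge of `conv S`, which `R` therefore blocks; symmetrically for `S`.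
Otherwise each tree, being connected, lies either in the interior of the other's hull or outside
it. It remains to see that the two trees cannot both lie outside each other's hull while the hulls
meet. A frontier point `x` of `conv R ∩ conv S` lies, say, on an edge `[p, q]` of `conv S` and in
`conv R`. Since `R` is connected and its hull meets the line `pq`, some `r ∈ R` lies on that line,
and whichever of `r, p, q` lies between the other two gives a point of `R` in `conv S` or a point
of `S` in `conv R`.
-/

open Set Module

section Segment

variable {𝕜 E : Type*} [Field 𝕜] [LinearOrder 𝕜] [IsStrictOrderedRing 𝕜] [AddCommGroup E]
  [Module 𝕜 E]

theorem left_mem_extremePoints_segment (p q : E) : p ∈ (segment 𝕜 p q).extremePoints 𝕜 := by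
  refine mem_extremePoints_iff_forall_segment.2 ⟨left_mem_segment 𝕜 p q, ?_⟩
  intro x₁ hx₁ x₂ hx₂ hp
  rw [mem_segment_iff_wbtw] at hx₁ hx₂ hp
  obtain ⟨a, ha, rfl⟩ := hx₁
  obtain ⟨b, hb, rfl⟩ := hx₂
  simp only [AffineMap.lineMap_apply] at hp ⊢
  rcases wbtw_or_wbtw_smul_vadd_of_nonneg p (q -ᵥ p) ha.1 hb.1 with h | h
  · exact Or.inl (h.swap_left_iff.1 hp).symm
  · exact Or.inr (h.swap_left_iff.1 hp.symm).symm

end Segment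

theorem IsCompact.exists_eq_segment_of_collinear {E : Type*} [NormedAddCommGroup E]
    [NormedSpace ℝ E] {F : Set E} (hFc : IsCompact F) (hF : Convex ℝ F) (hcol : Collinear ℝ F)
    (hne : F.Nonempty) : ∃ p q, F = segment ℝ p q := by
  -- `p`, `q` realise the diameter of `F`
  obtain ⟨⟨p, q⟩, ⟨hp, hq⟩, hmax⟩ :=
    (hFc.prod hFc).exists_isMaxOn (hne.prod hne) continuous_dist.continuousOn
  have hdist : ∀ a ∈ F, ∀ b ∈ F, dist a b ≤ dist p q := fun a ha b hb => hmax (mk_mem_prod ha hb)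
  refine ⟨p, q, subset_antisymm (fun y hy => ?_) (hF.segment_subset hp hq)⟩
  have hpyq : Collinear ℝ {p, y, q} :=
    hcol.subset (insert_subset_iff.2 ⟨hp, pair_subset hy hq⟩)
  rw [mem_segment_iff_wbtw]
  rcases hpyq.wbtw_or_wbtw_or_wbtw with h | h | h
  · exact h
  · have hyq : dist y q = 0 := by
      linarith [h.dist_add_dist, hdist y hy p hp, dist_comm p q, dist_nonneg (x := y) (y := q)]
    rw [dist_eq_zero.1 hyq]
    exact wbtw_self_right ℝ p q
  · have hpy : dist p y = 0 := by
      linarith [h.dist_add_dist, hdist q hq y hy, dist_comm p q, dist_nonneg (x := p) (y := y)]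
    rw [← dist_eq_zero.1 hpy]
    exact wbtw_self_left ℝ p q

theorem isCompact_convexHull_biUnion_segment {E : Type*} [AddCommGroup E] [Module ℝ E]
    [TopologicalSpace E] [IsTopologicalAddGroup E] [ContinuousSMul ℝ E] (ES : Finset (E × E)) :
    IsCompact (convexHull ℝ (⋃ e ∈ ES, segment ℝ e.1 e.2)) := by
  set V : Set E := ⋃ e ∈ ES, {e.1, e.2}
  have hV : (⋃ e ∈ ES, segment ℝ e.1 e.2) ⊆ convexHull ℝ V :=
    iUnion₂_subset fun e he => segment_subset_convexHull
      (mem_biUnion he (mem_insert _ _)) (mem_biUnion he (mem_insert_of_mem _ rfl))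
  have hVsub : V ⊆ ⋃ e ∈ ES, segment ℝ e.1 e.2 :=
    iUnion₂_mono fun e _ => pair_subset (left_mem_segment ℝ _ _) (right_mem_segment ℝ _ _)
  rw [subset_antisymm (convexHull_min hV (convex_convexHull ℝ V)) (convexHull_mono hVsub)]
  exact (ES.finite_toSet.biUnion fun e _ => toFinite {e.1, e.2}).isCompact_convexHull ℝ

theorem lt_of_mem_interior_of_forall_le {E : Type*} [AddCommGroup E] [TopologicalSpace E]
    [ContinuousAdd E] [Module ℝ E] [ContinuousSMul ℝ E] {f : StrongDual ℝ E} (hf : f ≠ 0)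
    {Q : Set E} {c : ℝ} (hQ : ∀ z ∈ Q, f z ≤ c) {y : E} (hy : y ∈ interior Q) : f y < c := by
  have : f '' interior Q ⊆ interior (Iic c) :=
    interior_maximal (image_subset_iff.2 fun z hz => hQ z (interior_subset hz))
      (f.isOpenMap_of_ne_zero hf _ isOpen_interior)
  simpa using this (mem_image_of_mem f hy)

theorem exists_ne_zero_forall_le_of_notMem_interior {E : Type*} [NormedAddCommGroup E]
    [NormedSpace ℝ E] [FiniteDimensional ℝ E] {Q : Set E} (hQ : Convex ℝ Q) {x : E}
    (hxQ : x ∈ Q) (hx : x ∉ interior Q) :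
    ∃ f : StrongDual ℝ E, f ≠ 0 ∧ ∀ y ∈ Q, f y ≤ f x := by
  by_cases hint : (interior Q).Nonempty
  · obtain ⟨f, hf⟩ := geometric_hahn_banach_open_point hQ.interior isOpen_interior hx
    obtain ⟨o, ho⟩ := hint
    refine ⟨f, fun h => by simpa [h] using hf o ho, fun y hy => ?_⟩
    have hcl : Q ⊆ closure (interior Q) := by
      rw [hQ.closure_interior_eq_closure_of_nonempty_interior ⟨o, ho⟩]
      exact subset_closure
    exact closure_minimal (fun z hz => (hf z hz).le)
      (isClosed_le f.continuous continuous_const) (hcl hy)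
  -- `Q` lies in a proper affine subspace, and a functional killing its direction is constant on `Q`
  · rw [hQ.interior_nonempty_iff_affineSpan_eq_top,
      AffineSubspace.affineSpan_eq_top_iff_vectorSpan_eq_top_of_nonempty ℝ E E ⟨x, hxQ⟩] at hint
    obtain ⟨f, hf, hspan⟩ :=
      Submodule.exists_dual_map_eq_bot_of_lt_top (lt_top_iff_ne_top.2 hint) inferInstance
    refine ⟨LinearMap.toContinuousLinearMap f, by simpa using hf, fun y hy => le_of_eq ?_⟩
    have : f (y -ᵥ x) = 0 := by
      rw [← Submodule.mem_bot ℝ, ← hspan]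
      exact Submodule.mem_map_of_mem (vsub_mem_vectorSpan ℝ hy hxQ)
    simpa [sub_eq_zero] using this

theorem IsPreconnected.exists_apply_eq_of_mem_convexHull {E : Type*} [AddCommGroup E]
    [Module ℝ E] [TopologicalSpace E] {R : Set E} (hR : IsPreconnected R) {f : E →ₗ[ℝ] ℝ}
    (hf : Continuous f) {x : E} (hx : x ∈ convexHull ℝ R) : ∃ r ∈ R, f r = f x := by
  have hfx : f x ∈ convexHull ℝ (f '' R) := f.image_convexHull R ▸ mem_image_of_mem f hx
  rwa [(hR.image f hf.continuousOn).convex.convexHull_eq] at hfx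

section TwoDimensional

variable {E : Type*} [AddCommGroup E] [Module ℝ E] [FiniteDimensional ℝ E]

theorem collinear_of_forall_apply_eq_s9 (hE : finrank ℝ E = 2) {f : E →ₗ[ℝ] ℝ} (hf : f ≠ 0)
    {s : Set E} {c : ℝ} (hs : ∀ y ∈ s, f y = c) : Collinear ℝ s := by
  have hker : finrank ℝ (LinearMap.ker f) = 1 := by
    have hrange : LinearMap.range f = ⊤ :=
      LinearMap.range_eq_top.2 (LinearMap.surjective_of_ne_zero hf)
    have := LinearMap.finrank_range_add_finrank_ker f
    rw [hrange, finrank_top, finrank_self] at this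
    omega
  have hle : vectorSpan ℝ s ≤ LinearMap.ker f := by
    rw [vectorSpan_def, Submodule.span_le]
    rintro _ ⟨a, ha, b, hb, rfl⟩
    simp [hs a ha, hs b hb]
  rw [collinear_iff_finrank_le_one]
  exact hker ▸ Submodule.finrank_mono hle

theorem exists_ne_zero_apply_eq (hE : finrank ℝ E = 2) (p q : E) :
    ∃ f : E →ₗ[ℝ] ℝ, f ≠ 0 ∧ f p = f q := by
  have hlt : ℝ ∙ (q - p) < ⊤ := by
    refine Submodule.lt_top_of_finrank_lt_finrank ?_
    have : finrank ℝ (ℝ ∙ (q - p)) ≤ 1 := (finrank_span_le_card {q - p}).trans (by simp)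
    omega
  obtain ⟨f, hf, hmap⟩ := Submodule.exists_dual_map_eq_bot_of_lt_top hlt inferInstance
  refine ⟨f, hf, ?_⟩
  have : f (q - p) = 0 := by
    rw [← Submodule.mem_bot ℝ, ← hmap]
    exact Submodule.mem_map_of_mem (Submodule.mem_span_singleton_self _)
  rw [map_sub, sub_eq_zero] at this
  exact this.symm

end TwoDimensional

theorem IsPreconnected.exists_collinear_of_mem_convexHull {E : Type*} [NormedAddCommGroup E]
    [NormedSpace ℝ E] [FiniteDimensional ℝ E] (hE : finrank ℝ E = 2) {R : Set E}
    (hR : IsPreconnected R) {p q x : E} (hx : x ∈ segment ℝ p q) (hxR : x ∈ convexHull ℝ R) :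
    ∃ r ∈ R, Collinear ℝ {p, q, r} := by
  obtain ⟨f, hf0, hfpq⟩ := exists_ne_zero_apply_eq hE p q
  obtain ⟨r, hr, hfr⟩ := hR.exists_apply_eq_of_mem_convexHull f.continuous_of_finiteDimensional hxR
  have hfx : f x = f p := by
    obtain ⟨a, b, -, -, hab, rfl⟩ := hx
    rw [map_add, map_smul, map_smul, ← hfpq, smul_eq_mul, smul_eq_mul, ← add_mul, hab, one_mul]
  refine ⟨r, hr, collinear_of_forall_apply_eq_s9 hE hf0 (c := f p) ?_⟩
  rintro y (rfl | rfl | rfl)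
  exacts [rfl, hfpq.symm, hfr.trans hfx]

theorem IsPreconnected.subset_interior_or_disjoint {X : Type*} [TopologicalSpace X] {A K : Set X}
    (hA : IsPreconnected A) (hK : IsClosed K) (hAK : Disjoint A (frontier K)) :
    A ⊆ interior K ∨ Disjoint A K := by
  have hcover : A ⊆ interior K ∪ Kᶜ := fun a ha => by
    by_cases haK : a ∈ K
    · exact Or.inl (by_contra fun hai => disjoint_left.1 hAK ha (hK.frontier_eq ▸ ⟨haK, hai⟩))
    · exact Or.inr haK
  rw [← subset_compl_iff_disjoint_right]
  exact hA.subset_or_subset isOpen_interior hK.isOpen_compl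
    (disjoint_compl_right.mono_left interior_subset) hcover

theorem mem_extremePoints_or_exists_adjacentHullVertices {Q : Set (ℝ × ℝ)} (hQ : Convex ℝ Q)
    (hQc : IsCompact Q) {x : ℝ × ℝ} (hx : x ∈ frontier Q) :
    x ∈ Q.extremePoints ℝ ∨ ∃ p q, AdjacentHullVertices Q p q ∧ x ∈ openSegment ℝ p q := by
  rw [hQc.isClosed.frontier_eq] at hx
  obtain ⟨f, hf0, hfx⟩ := exists_ne_zero_forall_le_of_notMem_interior hQ hx.1 hx.2
  set F := {y ∈ Q | ∀ z ∈ Q, f z ≤ f y}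
  have hFexp : IsExposed ℝ Q F := fun _ => ⟨f, rfl⟩
  have hxF : x ∈ F := ⟨hx.1, hfx⟩
  have hFeq : F = Q ∩ f ⁻¹' Ici (f x) := by
    ext y
    exact ⟨fun hy => ⟨hy.1, hy.2 x hx.1⟩, fun hy => ⟨hy.1, fun z hz => (hfx z hz).trans hy.2⟩⟩
  obtain ⟨p, q, hFpq⟩ : ∃ p q, F = segment ℝ p q := by
    refine IsCompact.exists_eq_segment_of_collinear ?_ (hFexp.convex hQ) ?_ ⟨x, hxF⟩
    · exact hFeq ▸ hQc.inter_right (isClosed_Ici.preimage f.continuous)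
    · refine collinear_of_forall_apply_eq_s9 (by simp) (f := f.toLinearMap)
        (by rwa [Ne, ← ContinuousLinearMap.toLinearMap_zero, ContinuousLinearMap.coe_inj])
        (c := f x) fun y hy => le_antisymm (hfx y hy.1) (hy.2 x hx.1)
  have hext : (segment ℝ p q).extremePoints ℝ ⊆ Q.extremePoints ℝ :=
    hFpq ▸ hFexp.isExtreme.extremePoints_subset_extremePoints
  have hp : p ∈ Q.extremePoints ℝ := hext (left_mem_extremePoints_segment p q)
  have hq : q ∈ Q.extremePoints ℝ :=
    hext (segment_symm ℝ p q ▸ left_mem_extremePoints_segment q p)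
  have hfront : segment ℝ p q ⊆ frontier Q := by
    rw [← hFpq, hQc.isClosed.frontier_eq]
    exact fun y hy => ⟨hy.1, fun hyi => (lt_of_mem_interior_of_forall_le hf0 hy.2 hyi).false⟩
  by_cases hxe : x ∈ Q.extremePoints ℝ
  · exact Or.inl hxe
  have hxpq : x ∈ segment ℝ p q := hFpq ▸ hxF
  have hxp : x ≠ p := fun h => hxe (h ▸ hp)
  have hxq : x ≠ q := fun h => hxe (h ▸ hq)
  have hpq : p ≠ q := by
    rintro rfl
    exact hxp (by simpa using hxpq)
  exact Or.inr ⟨p, q, ⟨hpq, hp, hq, hfront⟩,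
    mem_openSegment_of_ne_left_right hxp.symm hxq.symm hxpq⟩

theorem exists_adjacentHullVertices_openSegment_inter {R S : Set (ℝ × ℝ)}
    (hSc : IsCompact (convexHull ℝ S)) (hRS : Disjoint R S)
    (hRf : (R ∩ frontier (convexHull ℝ S)).Nonempty) :
    ∃ p q, AdjacentHullVertices (convexHull ℝ S) p q ∧ (openSegment ℝ p q ∩ R).Nonempty := by
  obtain ⟨y, hyR, hyf⟩ := hRf
  rcases mem_extremePoints_or_exists_adjacentHullVertices (convex_convexHull ℝ S) hSc hyf with
    hye | ⟨p, q, hpq, hy⟩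
  · exact absurd (extremePoints_convexHull_subset hye) (disjoint_left.1 hRS hyR)
  · exact ⟨p, q, hpq, y, hy, hyR⟩

theorem disjoint_frontier_convexHull_convexHull {R S : Set (ℝ × ℝ)} (hR : IsPreconnected R)
    (hSc : IsCompact (convexHull ℝ S)) (hRS : Disjoint R (convexHull ℝ S))
    (hSR : Disjoint S (convexHull ℝ R)) :
    Disjoint (frontier (convexHull ℝ S)) (convexHull ℝ R) := by
  rw [Set.disjoint_left]
  intro x hxS hxR
  rcases mem_extremePoints_or_exists_adjacentHullVertices (convex_convexHull ℝ S) hSc hxS with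
    hxe | ⟨p, q, ⟨-, hp, hq, -⟩, hxpq⟩
  · exact disjoint_left.1 hSR (extremePoints_convexHull_subset hxe) hxR
  have hxpq : x ∈ segment ℝ p q := openSegment_subset_segment ℝ p q hxpq
  have hpS : p ∈ S := extremePoints_convexHull_subset hp
  have hqS : q ∈ S := extremePoints_convexHull_subset hq
  obtain ⟨r, hr, hcol⟩ := hR.exists_collinear_of_mem_convexHull (by simp) hxpq hxR
  have hRx : ∀ {y}, Wbtw ℝ r y x → y ∈ convexHull ℝ R := fun h =>
    (convex_convexHull ℝ R).segment_subset (subset_convexHull ℝ R hr) hxR h.mem_segment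
  have hx : Wbtw ℝ p x q := mem_segment_iff_wbtw.1 hxpq
  rcases hcol.wbtw_or_wbtw_or_wbtw with h | h | h
  · exact disjoint_left.1 hSR hqS (hRx (h.trans_left_right hx).symm)
  · exact disjoint_left.1 hRS hr ((convex_convexHull ℝ S).segment_subset
      (subset_convexHull ℝ S hqS) (subset_convexHull ℝ S hpS) h.mem_segment)
  · exact disjoint_left.1 hSR hpS (hRx (h.trans_right_left hx))

theorem disjoint_convexHull_of_disjoint {R S : Set (ℝ × ℝ)} (hR : IsPreconnected R)
    (hS : IsPreconnected S) (hRc : IsCompact (convexHull ℝ R)) (hSc : IsCompact (convexHull ℝ S))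
    (hRS : Disjoint R (convexHull ℝ S)) (hSR : Disjoint S (convexHull ℝ R)) :
    Disjoint (convexHull ℝ R) (convexHull ℝ S) := by
  rw [disjoint_iff_inter_eq_empty, ← not_nonempty_iff_eq_empty]
  intro hne
  obtain ⟨x, hx⟩ := nonempty_frontier_iff.2 ⟨hne, (hRc.inter_right hSc.isClosed).ne_univ⟩
  rcases frontier_inter_subset _ _ hx with ⟨hxR, hxS⟩ | ⟨hxR, hxS⟩
  · rw [hSc.isClosed.closure_eq] at hxS
    exact disjoint_left.1 (disjoint_frontier_convexHull_convexHull hS hRc hSR hRS) hxR hxS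
  · rw [hRc.isClosed.closure_eq] at hxR
    exact disjoint_left.1 (disjoint_frontier_convexHull_convexHull hR hSc hRS hSR) hxS hxR

theorem blocked_or_nested_general
    (R S : Set (ℝ × ℝ))
    (ER ES : Finset ((ℝ × ℝ) × (ℝ × ℝ)))
    (hR : R = ⋃ e ∈ ER, segment ℝ e.1 e.2)
    (hS : S = ⋃ e ∈ ES, segment ℝ e.1 e.2)
    (hRconn : IsConnected R) (hSconn : IsConnected S)
    (hRS : Disjoint R S)
    (hinter : (convexHull ℝ R ∩ convexHull ℝ S).Nonempty) :
    convexHull ℝ R ⊆ interior (convexHull ℝ S) ∨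
    convexHull ℝ S ⊆ interior (convexHull ℝ R) ∨
    (∃ p q : ℝ × ℝ, AdjacentHullVertices (convexHull ℝ S) p q ∧
      (openSegment ℝ p q ∩ R).Nonempty) ∨
    (∃ p q : ℝ × ℝ, AdjacentHullVertices (convexHull ℝ R) p q ∧
      (openSegment ℝ p q ∩ S).Nonempty) := by
  have hRc : IsCompact (convexHull ℝ R) := hR ▸ isCompact_convexHull_biUnion_segment ER
  have hSc : IsCompact (convexHull ℝ S) := hS ▸ isCompact_convexHull_biUnion_segment ES
  by_cases hRf : (R ∩ frontier (convexHull ℝ S)).Nonempty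
  · exact Or.inr <| Or.inr <| Or.inl <| exists_adjacentHullVertices_openSegment_inter hSc hRS hRf
  by_cases hSf : (S ∩ frontier (convexHull ℝ R)).Nonempty
  · exact Or.inr <| Or.inr <| Or.inr <|
      exists_adjacentHullVertices_openSegment_inter hRc hRS.symm hSf
  rw [not_nonempty_iff_eq_empty, ← disjoint_iff_inter_eq_empty] at hRf hSf
  rcases hRconn.isPreconnected.subset_interior_or_disjoint hSc.isClosed hRf with hRin | hRout
  · exact Or.inl (convexHull_min hRin (convex_convexHull ℝ S).interior)
  rcases hSconn.isPreconnected.subset_interior_or_disjoint hRc.isClosed hSf with hSin | hSout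
  · exact Or.inr (Or.inl (convexHull_min hSin (convex_convexHull ℝ R).interior))
  exact absurd hinter <| not_nonempty_iff_eq_empty.2 <| disjoint_iff_inter_eq_empty.1 <|
    disjoint_convexHull_of_disjoint hRconn.isPreconnected hSconn.isPreconnected hRc hSc hRout hSout

theorem blocked_or_nested
    (R S : Set (ℝ × ℝ)) (VR VS : Finset (ℝ × ℝ))
    (ER ES : Finset ((ℝ × ℝ) × (ℝ × ℝ)))
    (hERV : ∀ e ∈ ER, e.1 ∈ VR ∧ e.2 ∈ VR)
    (hESV : ∀ e ∈ ES, e.1 ∈ VS ∧ e.2 ∈ VS)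
    (hR : R = ⋃ e ∈ ER, segment ℝ e.1 e.2)
    (hS : S = ⋃ e ∈ ES, segment ℝ e.1 e.2)
    (hRne : R.Nonempty) (hSne : S.Nonempty)
    (hRcompact : IsCompact R) (hScompact : IsCompact S)
    (hRconn : IsConnected R) (hSconn : IsConnected S)
    (hRS : Disjoint R S)
    (hgen : ∀ p q r : ℝ × ℝ, p ∈ (VR : Set (ℝ × ℝ)) ∪ (VS : Set (ℝ × ℝ)) →
      q ∈ (VR : Set (ℝ × ℝ)) ∪ (VS : Set (ℝ × ℝ)) →
      r ∈ (VR : Set (ℝ × ℝ)) ∪ (VS : Set (ℝ × ℝ)) →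
      p ≠ q → q ≠ r → p ≠ r → ¬ Collinear ℝ ({p, q, r} : Set (ℝ × ℝ)))
    (hgenR : ∀ v ∈ VR, v ∉ frontier (convexHull ℝ S))
    (hgenS : ∀ v ∈ VS, v ∉ frontier (convexHull ℝ R))
    (hinter : (convexHull ℝ R ∩ convexHull ℝ S).Nonempty) :
    convexHull ℝ R ⊆ interior (convexHull ℝ S) ∨
    convexHull ℝ S ⊆ interior (convexHull ℝ R) ∨
    (∃ p q : ℝ × ℝ, AdjacentHullVertices (convexHull ℝ S) p q ∧
      (openSegment ℝ p q ∩ R).Nonempty) ∨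
    (∃ p q : ℝ × ℝ, AdjacentHullVertices (convexHull ℝ R) p q ∧
      (openSegment ℝ p q ∩ S).Nonempty) :=
  blocked_or_nested_general R S ER ES hR hS hRconn hSconn hRS hinter
end

section
/- Let S be a connected subset of ℝ², let p ∈ ℝ², and let v ∈ ℝ² be nonzero. If the line ℓ = { p + t • v : t ∈ ℝ } intersects convexHull ℝ S, then ℓ intersects S. Consequently, a line intersects the convex hull of a connected set if and only if it intersects the set itself. -/
/-!
The line through `p` with direction `v ≠ 0` is a level set of the continuous linear functional
`x ↦ x.1 * v.2 - x.2 * v.1`. Under a continuous linear functional `f`, a connected set `S` maps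
onto an interval, which is convex, so `f '' convexHull ℝ S = convexHull ℝ (f '' S) = f '' S`:
every value `f` takes on the convex hull it already takes on `S`.
-/

open Set

section LevelSet

variable {E : Type*} [AddCommGroup E] [Module ℝ E] [TopologicalSpace E]

theorem ContinuousLinearMap.image_convexHull_eq_image_of_isPreconnected (f : E →L[ℝ] ℝ)
    {S : Set E} (hS : IsPreconnected S) : f '' convexHull ℝ S = f '' S := by
  refine (f.toLinearMap.image_convexHull S).trans ?_
  exact (hS.image f f.continuous.continuousOn).ordConnected.convex.convexHull_eq

theorem ContinuousLinearMap.preimage_singleton_inter_convexHull_nonempty_iff (f : E →L[ℝ] ℝ)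
    {S : Set E} (hS : IsPreconnected S) (c : ℝ) :
    (f ⁻¹' {c} ∩ convexHull ℝ S).Nonempty ↔ (f ⁻¹' {c} ∩ S).Nonempty := by
  rw [inter_comm, ← image_inter_nonempty_iff, f.image_convexHull_eq_image_of_isPreconnected hS,
    image_inter_nonempty_iff, inter_comm]

end LevelSet

noncomputable def perpDot (v : ℝ × ℝ) : ℝ × ℝ →L[ℝ] ℝ :=
  v.2 • ContinuousLinearMap.fst ℝ ℝ ℝ - v.1 • ContinuousLinearMap.snd ℝ ℝ ℝ

@[simp]
theorem perpDot_apply (v x : ℝ × ℝ) : perpDot v x = x.1 * v.2 - x.2 * v.1 := by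
  simp [perpDot, mul_comm]

theorem perpDot_eq_zero_iff_exists_smul {v : ℝ × ℝ} (hv : v ≠ 0) (w : ℝ × ℝ) :
    perpDot v w = 0 ↔ ∃ t : ℝ, w = t • v := by
  constructor
  · intro h
    rw [perpDot_apply] at h
    have hnorm : v.1 ^ 2 + v.2 ^ 2 ≠ 0 := by
      intro h0
      obtain ⟨h1, h2⟩ := (add_eq_zero_iff_of_nonneg (sq_nonneg _) (sq_nonneg _)).1 h0
      exact hv (Prod.ext (eq_zero_of_pow_eq_zero h1) (eq_zero_of_pow_eq_zero h2))
    -- `t` is the projection coefficient `⟪w, v⟫ / ‖v‖²`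
    refine ⟨(w.1 * v.1 + w.2 * v.2) / (v.1 ^ 2 + v.2 ^ 2), Prod.ext ?_ ?_⟩
    all_goals simp only [Prod.smul_fst, Prod.smul_snd, smul_eq_mul]; field_simp
    · linear_combination v.2 * h
    · linear_combination -v.1 * h
  · rintro ⟨t, rfl⟩
    simp only [perpDot_apply, Prod.smul_fst, Prod.smul_snd, smul_eq_mul]
    ring

theorem exists_eq_add_smul_iff_perpDot_eq {v : ℝ × ℝ} (hv : v ≠ 0) (p x : ℝ × ℝ) :
    (∃ t : ℝ, x = p + t • v) ↔ perpDot v x = perpDot v p := by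
  simp only [← sub_eq_zero (a := perpDot v x), ← map_sub, perpDot_eq_zero_iff_exists_smul hv,
    sub_eq_iff_eq_add']

theorem line_hits_convexHull_iff_hits_connected_set
    (S : Set (ℝ × ℝ)) (hS : IsConnected S)
    (p v : ℝ × ℝ) (hv : v ≠ 0) :
    ({x : ℝ × ℝ | ∃ t : ℝ, x = p + t • v} ∩ convexHull ℝ S).Nonempty ↔
    ({x : ℝ × ℝ | ∃ t : ℝ, x = p + t • v} ∩ S).Nonempty := by
  have hline : {x : ℝ × ℝ | ∃ t : ℝ, x = p + t • v} = perpDot v ⁻¹' {perpDot v p} :=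
    Set.ext (exists_eq_add_smul_iff_perpDot_eq hv p)
  rw [hline]
  exact (perpDot v).preimage_singleton_inter_convexHull_nonempty_iff hS.isPreconnected _
end

section
/- Let T₁, …, T_m be nonempty connected subsets of ℝ² and let p ∈ ℝ². Then p belongs to the coverage of {T₁, …, T_m} if and only if p belongs to the coverage of {convexHull ℝ T₁, …, convexHull ℝ T_m}; that is, (for every nonzero v ∈ ℝ² there exist an index i and t ∈ ℝ with p + t • v ∈ Tᵢ) if and only if (for every nonzero v ∈ ℝ² there exist an index i and t ∈ ℝ with p + t • v ∈ convexHull ℝ Tᵢ). -/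
/-!
Let `L` be the line through `p` with direction `v`. If a connected set `T` misses `L`, it lies in
one of the two open half-planes bounded by `L`, because these are disjoint open sets covering the
complement of `L`. Open half-planes are convex, so `convexHull T` lies in the same half-plane and
misses `L` as well. Hence a line meeting the hull of `T` meets `T` itself; the converse is trivial.
-/

open Set

theorem IsPreconnected.disjoint_convexHull_of_disjoint_levelSet
    {𝕜 E : Type*} [Field 𝕜] [LinearOrder 𝕜] [IsStrictOrderedRing 𝕜] [TopologicalSpace 𝕜]
    [OrderTopology 𝕜] [AddCommGroup E] [Module 𝕜 E] [TopologicalSpace E]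
    {s : Set E} (hs : IsPreconnected s) (f : E →L[𝕜] 𝕜) (c : 𝕜)
    (h : Disjoint s (f ⁻¹' {c})) : Disjoint (convexHull 𝕜 s) (f ⁻¹' {c}) := by
  have hcover : s ⊆ {x | f x < c} ∪ {x | c < f x} := fun x hx =>
    lt_or_gt_of_ne fun hxc => h.notMem_of_mem_left hx hxc
  rcases hs.subset_or_subset (isOpen_lt f.continuous continuous_const)
      (isOpen_lt continuous_const f.continuous)
      (disjoint_left.2 fun x hlt hgt => lt_asymm hlt hgt) hcover with hlt | hgt
  · exact disjoint_left.2 fun x hx hxc =>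
      (convexHull_min hlt (convex_halfSpace_lt f.isLinear c) hx).ne hxc
  · exact disjoint_left.2 fun x hx hxc =>
      (convexHull_min hgt (convex_halfSpace_gt f.isLinear c) hx).ne' hxc

def planeCross (v : ℝ × ℝ) : ℝ × ℝ →L[ℝ] ℝ :=
  v.2 • ContinuousLinearMap.fst ℝ ℝ ℝ - v.1 • ContinuousLinearMap.snd ℝ ℝ ℝ

theorem planeCross_apply (v x : ℝ × ℝ) : planeCross v x = x.1 * v.2 - x.2 * v.1 := by
  simp [planeCross, mul_comm]

theorem planeCross_self (v : ℝ × ℝ) : planeCross v v = 0 := by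
  rw [planeCross_apply, mul_comm, sub_self]

theorem planeCross_add_smul (p v : ℝ × ℝ) (t : ℝ) :
    planeCross v (p + t • v) = planeCross v p := by
  simp [planeCross_self]

theorem exists_add_smul_eq_of_planeCross_eq {p v x : ℝ × ℝ} (hv : v ≠ 0)
    (h : planeCross v x = planeCross v p) : ∃ t : ℝ, p + t • v = x := by
  rw [planeCross_apply, planeCross_apply] at h
  obtain h1 | h2 : v.1 ≠ 0 ∨ v.2 ≠ 0 := by
    by_contra! h0
    exact hv (Prod.ext h0.1 h0.2)
  · refine ⟨(x.1 - p.1) / v.1, Prod.ext ?_ ?_⟩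
    · simp only [Prod.fst_add, Prod.smul_fst, smul_eq_mul]
      field_simp
      ring
    · simp only [Prod.snd_add, Prod.smul_snd, smul_eq_mul]
      field_simp
      linear_combination h
  · refine ⟨(x.2 - p.2) / v.2, Prod.ext ?_ ?_⟩
    · simp only [Prod.fst_add, Prod.smul_fst, smul_eq_mul]
      field_simp
      linear_combination -h
    · simp only [Prod.snd_add, Prod.smul_snd, smul_eq_mul]
      field_simp
      ring

theorem coverage_eq_coverage_of_hulls_general
    (m : ℕ) (T : Fin m → Set (ℝ × ℝ))
    (hTconn : ∀ i, IsConnected (T i))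
    (p : ℝ × ℝ) :
    (∀ v : ℝ × ℝ, v ≠ 0 → ∃ (i : Fin m) (t : ℝ), p + t • v ∈ T i) ↔
    (∀ v : ℝ × ℝ, v ≠ 0 → ∃ (i : Fin m) (t : ℝ), p + t • v ∈ convexHull ℝ (T i)) := by
  refine ⟨fun h v hv => ?_, fun h v hv => ?_⟩
  · obtain ⟨i, t, ht⟩ := h v hv
    exact ⟨i, t, subset_convexHull ℝ _ ht⟩
  · by_contra! hmiss
    obtain ⟨i, t, ht⟩ := h v hv
    have hdisj : Disjoint (T i) (planeCross v ⁻¹' {planeCross v p}) := by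
      refine disjoint_left.2 fun x hx hxline => ?_
      obtain ⟨s, rfl⟩ := exists_add_smul_eq_of_planeCross_eq hv hxline
      exact hmiss i s hx
    have hhull := (hTconn i).isPreconnected.disjoint_convexHull_of_disjoint_levelSet _ _ hdisj
    exact hhull.notMem_of_mem_left ht (planeCross_add_smul p v t)

theorem coverage_eq_coverage_of_hulls
    (m : ℕ) (T : Fin m → Set (ℝ × ℝ))
    (hTne : ∀ i, (T i).Nonempty) (hTconn : ∀ i, IsConnected (T i))
    (p : ℝ × ℝ) :
    (∀ v : ℝ × ℝ, v ≠ 0 → ∃ (i : Fin m) (t : ℝ), p + t • v ∈ T i) ↔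
    (∀ v : ℝ × ℝ, v ≠ 0 → ∃ (i : Fin m) (t : ℝ), p + t • v ∈ convexHull ℝ (T i)) :=
  coverage_eq_coverage_of_hulls_general m T hTconn p
end

section
/- Let A and B be subsets of ℝ² with (convexHull ℝ A) ∩ (convexHull ℝ B) ≠ ∅, let p ∈ ℝ², and let v ∈ ℝ² be nonzero. Then the line ℓ = { p + t • v : t ∈ ℝ } intersects convexHull ℝ (A ∪ B) if and only if ℓ intersects convexHull ℝ A or ℓ intersects convexHull ℝ B. Consequently, if two convex hulls overlap, replacing them by the convex hull of their union does not change the coverage. -/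
/-!
The line through `p` with direction `v` is the level set `{y | v × y = v × p}` of the linear
functional `y ↦ v × y` (the planar cross product with `v`). A linear functional maps convex hulls
to convex hulls, so it maps `convexHull (A ∪ B)` onto the convex hull of the two intervals obtained
from `convexHull A` and `convexHull B`. These intervals meet, so their union is already an
interval, and the level `v × p` is attained on `convexHull (A ∪ B)` iff it is attained on
`convexHull A` or on `convexHull B`.
-/

open Set

theorem Set.preimage_singleton_inter_nonempty_iff {α β : Type*} {f : α → β} {b : β} {s : Set α} :
    (f ⁻¹' {b} ∩ s).Nonempty ↔ b ∈ f '' s := by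
  rw [inter_comm, ← image_inter_nonempty_iff, inter_singleton_nonempty]

theorem Real.convex_union {s t : Set ℝ} (hs : Convex ℝ s) (ht : Convex ℝ t)
    (hst : (s ∩ t).Nonempty) : Convex ℝ (s ∪ t) :=
  (hs.isPreconnected.union' hst ht.isPreconnected).convex

theorem LinearMap.image_convexHull_union_of_inter_nonempty {E : Type*} [AddCommGroup E]
    [Module ℝ E] (f : E →ₗ[ℝ] ℝ) {s t : Set E} (hst : (convexHull ℝ s ∩ convexHull ℝ t).Nonempty) :
    f '' convexHull ℝ (s ∪ t) = f '' convexHull ℝ s ∪ f '' convexHull ℝ t := by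
  refine subset_antisymm ?_ <| union_subset (image_mono <| convexHull_mono subset_union_left)
    (image_mono <| convexHull_mono subset_union_right)
  have hconvex : Convex ℝ (f '' convexHull ℝ s ∪ f '' convexHull ℝ t) :=
    Real.convex_union ((convex_convexHull ℝ s).linear_image f)
      ((convex_convexHull ℝ t).linear_image f) ((hst.image f).mono (image_inter_subset _ _ _))
  rw [f.image_convexHull, image_union]
  exact convexHull_min (union_subset_union (image_mono (subset_convexHull ℝ s))
    (image_mono (subset_convexHull ℝ t))) hconvex

def crossLeft (v : ℝ × ℝ) : ℝ × ℝ →ₗ[ℝ] ℝ :=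
  v.1 • LinearMap.snd ℝ ℝ ℝ - v.2 • LinearMap.fst ℝ ℝ ℝ

theorem crossLeft_apply (v y : ℝ × ℝ) : crossLeft v y = v.1 * y.2 - v.2 * y.1 := rfl

theorem line_eq_preimage_crossLeft {p v : ℝ × ℝ} (hv : v ≠ 0) :
    {x : ℝ × ℝ | ∃ t : ℝ, x = p + t • v} = crossLeft v ⁻¹' {crossLeft v p} := by
  ext y
  simp only [mem_ofPred_eq, mem_preimage, mem_singleton_iff, crossLeft_apply]
  constructor
  · rintro ⟨t, rfl⟩
    simp only [Prod.fst_add, Prod.snd_add, Prod.smul_fst, Prod.smul_snd, smul_eq_mul]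
    ring
  · intro hy
    have hnorm : v.1 ^ 2 + v.2 ^ 2 ≠ 0 := by
      intro h
      obtain ⟨h1, h2⟩ := (add_eq_zero_iff_of_nonneg (sq_nonneg _) (sq_nonneg _)).1 h
      exact hv (Prod.ext (pow_eq_zero_iff two_ne_zero |>.1 h1) (pow_eq_zero_iff two_ne_zero |>.1 h2))
    -- `t` is the orthogonal projection coefficient of `y - p` onto `v`.
    refine ⟨(v.1 * (y.1 - p.1) + v.2 * (y.2 - p.2)) / (v.1 ^ 2 + v.2 ^ 2), ?_⟩
    ext <;> simp only [Prod.fst_add, Prod.snd_add, Prod.smul_fst, Prod.smul_snd, smul_eq_mul] <;>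
      field_simp
    · linear_combination (-v.2) * hy
    · linear_combination v.1 * hy

theorem line_hits_hull_of_union_iff
    (A B : Set (ℝ × ℝ))
    (hAB : (convexHull ℝ A ∩ convexHull ℝ B).Nonempty)
    (p v : ℝ × ℝ) (hv : v ≠ 0) :
    ({x : ℝ × ℝ | ∃ t : ℝ, x = p + t • v} ∩ convexHull ℝ (A ∪ B)).Nonempty ↔
    ({x : ℝ × ℝ | ∃ t : ℝ, x = p + t • v} ∩ convexHull ℝ A).Nonempty ∨
    ({x : ℝ × ℝ | ∃ t : ℝ, x = p + t • v} ∩ convexHull ℝ B).Nonempty := by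
  simp only [line_eq_preimage_crossLeft hv, preimage_singleton_inter_nonempty_iff]
  rw [(crossLeft v).image_convexHull_union_of_inter_nonempty hAB, mem_union]
end
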